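/- arXiv:2212.00713 — 12 statements merged into one kernel-verified Lean document; each statement's English description precedes it below -/
import Mathlib

section
/- Let V be a finite-dimensional real vector space and A : V → V a semisimple linear endomorphism. Then (a) the complexification of A, i.e. the induced ℂ-linear endomorphism of ℂ ⊗_ℝ V, is semisimple, and (b) the linear endomorphism ad_A of the space End(V) of ℝ-linear endomorphisms of V, given by ad_A(X) = A∘X − X∘A, is semisimple. -/
open scoped TensorProduct

/-!
A semisimple endomorphism of a finite-dimensional space has a squarefree minimal polynomial, and
conversely an endomorphism killed by a squarefree polynomial is semisimple. Over `ℝ` squarefree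
means separable, so the minimal polynomial of `A` stays squarefree over `ℂ` and kills the
complexification. It also kills left and right multiplication by `A` on `End(V)`, which are
therefore commuting semisimple endomorphisms, and over a perfect field their difference `ad_A` is
again semisimple.
-/

open Polynomial

namespace Module.End

variable {K M N : Type*} [Field K] [AddCommGroup M] [Module K M] [FiniteDimensional K M]
  [AddCommGroup N] [Module K N] {f : End K M}

theorem isSemisimple_of_aeval_minpoly_eq_zero (hf : f.IsSemisimple) {g : End K N}
    (hg : aeval g (minpoly K f) = 0) : g.IsSemisimple :=
  isSemisimple_of_squarefree_aeval_eq_zero hf.minpoly_squarefree hg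

theorem IsSemisimple.mulLeft (hf : f.IsSemisimple) : IsSemisimple (LinearMap.mulLeft K f) :=
  isSemisimple_of_aeval_minpoly_eq_zero hf <| by
    rw [show LinearMap.mulLeft K f = Algebra.lmul K (End K M) f from rfl, aeval_algHom_apply,
      minpoly.aeval, map_zero]

theorem IsSemisimple.mulRight (hf : f.IsSemisimple) : IsSemisimple (LinearMap.mulRight K f) :=
  isSemisimple_of_aeval_minpoly_eq_zero hf <| by
    rw [show LinearMap.mulRight K f = Algebra.lsmul K K (End K M) (MulOpposite.op f) from rfl,
      aeval_algHom_apply, aeval_op_apply, minpoly.aeval, MulOpposite.op_zero, map_zero]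

theorem IsSemisimple.baseChange [PerfectField K] (L : Type*) [Field L] [Algebra K L]
    (hf : f.IsSemisimple) : IsSemisimple (f.baseChange L) := by
  have hsep : (minpoly K f).Separable :=
    PerfectField.separable_iff_squarefree.mpr hf.minpoly_squarefree
  refine isSemisimple_of_squarefree_aeval_eq_zero (hsep.map (f := algebraMap K L)).squarefree ?_
  rw [aeval_map_algebraMap, show f.baseChange L = baseChangeHom K L M f from rfl,
    aeval_algHom_apply, minpoly.aeval, map_zero]

end Module.End

/-- If `A` is a semisimple endomorphism of a finite-dimensional real vector space `V`, then
(a) its complexification, the induced `ℂ`-linear endomorphism of `ℂ ⊗[ℝ] V`, is semisimple, and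
(b) the endomorphism `ad_A : X ↦ A ∘ X - X ∘ A` of `End(V)` is semisimple. -/
theorem stmt1 {V : Type*} [AddCommGroup V] [Module ℝ V] [FiniteDimensional ℝ V]
    (A : V →ₗ[ℝ] V) (hA : Module.End.IsSemisimple A) :
    Module.End.IsSemisimple (A.baseChange ℂ) ∧
    Module.End.IsSemisimple
      ((LinearMap.mulLeft ℝ A - LinearMap.mulRight ℝ A : Module.End ℝ V →ₗ[ℝ] Module.End ℝ V)) :=
  ⟨hA.baseChange ℂ,
    hA.mulLeft.sub_of_commute (LinearMap.commute_mulLeft_right A A) hA.mulRight⟩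
end

section
/- Let A ∈ Matrix n n ℝ be normal, i.e. A·Aᵀ = Aᵀ·A, and let ad_A : Matrix n n ℝ → Matrix n n ℝ be given by ad_A(X) = AX − XA. Then ker(ad_A) and range(ad_A) are complementary subspaces of Matrix n n ℝ, and they are orthogonal with respect to the Frobenius inner product: trace(Xᵀ·(AZ − ZA)) = 0 whenever AX = XA and Z ∈ Matrix n n ℝ. -/
/-!
If `A` is normal and `X` commutes with `A`, then `X` also commutes with `Aᴴ` (Fuglede), so `Xᴴ`
commutes with `A` and cyclicity of the trace gives `trace (Xᴴ * (A * Z - Z * A)) = 0`. Applied to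
`X = A * Z - Z * A` in the kernel of `ad_A` this gives `trace (Xᴴ * X) = 0`, i.e. `X = 0`; so kernel
and range are disjoint, and rank–nullity makes them complementary.
-/

open Matrix

theorem LinearMap.isCompl_ker_range_of_disjoint {K V : Type*} [DivisionRing K] [AddCommGroup V]
    [Module K V] [FiniteDimensional K V] {f : V →ₗ[K] V} (h : Disjoint (ker f) (range f)) :
    IsCompl (ker f) (range f) :=
  (Submodule.isCompl_iff_disjoint _ _ (by rw [add_comm, f.finrank_range_add_finrank_ker])).mpr h

namespace Matrix

variable {m R : Type*} [Fintype m] [CommRing R] [PartialOrder R] [StarRing R] [StarOrderedRing R]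
  [NoZeroDivisors R] {A X : Matrix m m R}

/-- Fuglede's theorem for matrices. With `B = Aᴴ * X - X * Aᴴ`, the four terms of
`trace (Bᴴ * B)` cancel in pairs by normality, `A * X = X * A` and cyclicity of the trace. -/
theorem conjTranspose_mul_comm_of_mul_comm (hA : A * Aᴴ = Aᴴ * A) (hX : A * X = X * A) :
    Aᴴ * X = X * Aᴴ := by
  have hA' (Y : Matrix m m R) : A * (Aᴴ * Y) = Aᴴ * (A * Y) := by rw [← mul_assoc, hA, mul_assoc]
  have hX' (Y : Matrix m m R) : A * (X * Y) = X * (A * Y) := by rw [← mul_assoc, hX, mul_assoc]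
  have h₁ : (Xᴴ * A * (Aᴴ * X)).trace = (A * Xᴴ * (Aᴴ * X)).trace := by
    rw [mul_assoc A, trace_mul_comm A]; simp only [mul_assoc, hA', hX]
  have h₂ : (Xᴴ * A * (X * Aᴴ)).trace = (A * Xᴴ * (X * Aᴴ)).trace := by
    rw [mul_assoc A, trace_mul_comm A]; simp only [mul_assoc, hX', hA]
  rw [← sub_eq_zero, ← trace_conjTranspose_mul_self_eq_zero_iff]
  simp only [conjTranspose_sub, conjTranspose_mul, conjTranspose_conjTranspose, sub_mul, mul_sub,
    trace_sub, h₁, h₂, sub_self]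

theorem trace_conjTranspose_mul_commutator_eq_zero (hA : A * Aᴴ = Aᴴ * A) (hX : A * X = X * A)
    (Z : Matrix m m R) : (Xᴴ * (A * Z - Z * A)).trace = 0 := by
  have hXA : Xᴴ * A = A * Xᴴ := by
    simpa using congrArg conjTranspose (conjTranspose_mul_comm_of_mul_comm hA hX)
  rw [mul_sub, trace_sub, ← mul_assoc, hXA, mul_assoc, trace_mul_comm A, mul_assoc, sub_self]

theorem disjoint_ker_range_mulLeft_sub_mulRight (hA : A * Aᴴ = Aᴴ * A) :
    Disjoint (LinearMap.ker (LinearMap.mulLeft R A - LinearMap.mulRight R A))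
      (LinearMap.range (LinearMap.mulLeft R A - LinearMap.mulRight R A)) := by
  rw [Submodule.disjoint_def]
  rintro Y hY ⟨Z, rfl⟩
  simp only [LinearMap.mem_ker, LinearMap.sub_apply, LinearMap.mulLeft_apply,
    LinearMap.mulRight_apply] at hY ⊢
  exact trace_conjTranspose_mul_self_eq_zero_iff.mp
    (trace_conjTranspose_mul_commutator_eq_zero hA (sub_eq_zero.mp hY) Z)

end Matrix

/-- If `A ∈ Matrix n n ℝ` is normal (`A*Aᵀ = Aᵀ*A`), then the kernel and range of
`ad_A : X ↦ A*X - X*A` are complementary subspaces of `Matrix n n ℝ`, and they are orthogonal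
for the Frobenius inner product: `trace (Xᵀ * (A*Z - Z*A)) = 0` whenever `A*X = X*A`. -/
theorem stmt4 {n : ℕ} (A : Matrix (Fin n) (Fin n) ℝ) (hA : A * Aᵀ = Aᵀ * A) :
    IsCompl
      (LinearMap.ker
        (LinearMap.mulLeft ℝ A - LinearMap.mulRight ℝ A :
          Matrix (Fin n) (Fin n) ℝ →ₗ[ℝ] Matrix (Fin n) (Fin n) ℝ))
      (LinearMap.range
        (LinearMap.mulLeft ℝ A - LinearMap.mulRight ℝ A :
          Matrix (Fin n) (Fin n) ℝ →ₗ[ℝ] Matrix (Fin n) (Fin n) ℝ)) ∧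
    (∀ X Z : Matrix (Fin n) (Fin n) ℝ, A * X = X * A →
      (Xᵀ * (A * Z - Z * A)).trace = 0) := by
  rw [← conjTranspose_eq_transpose_of_trivial] at hA
  refine ⟨LinearMap.isCompl_ker_range_of_disjoint (disjoint_ker_range_mulLeft_sub_mulRight hA),
    fun X Z hX => ?_⟩
  simpa only [conjTranspose_eq_transpose_of_trivial] using
    trace_conjTranspose_mul_commutator_eq_zero hA hX Z
end

section
/- Let 𝔤 be a finite-dimensional real Lie algebra with Killing form B, and suppose 𝔤 = 𝔨 ⊕ 𝔭 is a direct sum of subspaces satisfying [𝔨, 𝔨] ⊆ 𝔨, [𝔨, 𝔭] ⊆ 𝔭, and [𝔭, 𝔭] ⊆ 𝔨. Assume B is anisotropic on 𝔨, i.e. if k ∈ 𝔨 and B(k, k) = 0 then k = 0. Let V and W be subspaces of 𝔭 that are each invariant under ad_k for every k ∈ 𝔨, and that are orthogonal with respect to the Killing form, i.e. B(v, w) = 0 for all v ∈ V and w ∈ W. Then [v, w] = 0 for all v ∈ V and w ∈ W. -/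
/-!
Since `⁅v, w⁆ ∈ 𝔨` acts on `W`, invariance of the Killing form gives
`B(⁅v, w⁆, ⁅v, w⁆) = -B(v, ⁅⁅v, w⁆, w⁆) = 0`, so anisotropy on `𝔨` forces `⁅v, w⁆ = 0`.
-/

namespace LieModule

variable {R L : Type*} [CommRing R] [LieRing L] [LieAlgebra R L]
  (M : Type*) [AddCommGroup M] [Module R M] [LieRingModule L M] [LieModule R L M]

lemma traceForm_lie_lie_self (x y : L) :
    traceForm R L M ⁅x, y⁆ ⁅x, y⁆ = -traceForm R L M x ⁅⁅x, y⁆, y⁆ := by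
  rw [traceForm_apply_lie_apply, ← lie_skew ⁅x, y⁆ y, map_neg, neg_neg]

end LieModule

theorem stmt8_general {L : Type*} [LieRing L] [LieAlgebra ℝ L]
    (k p : Submodule ℝ L)
    (hpp : ∀ x ∈ p, ∀ y ∈ p, ⁅x, y⁆ ∈ k)
    (haniso : ∀ x ∈ k, killingForm ℝ L x x = 0 → x = 0)
    (V W : Submodule ℝ L) (hVp : V ≤ p) (hWp : W ≤ p)
    (hWinv : ∀ u ∈ k, ∀ w ∈ W, ⁅u, w⁆ ∈ W)
    (horth : ∀ v ∈ V, ∀ w ∈ W, killingForm ℝ L v w = 0) :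
    ∀ v ∈ V, ∀ w ∈ W, ⁅v, w⁆ = 0 := by
  intro v hv w hw
  have hvw : ⁅v, w⁆ ∈ k := hpp v (hVp hv) w (hWp hw)
  refine haniso _ hvw ?_
  rw [LieModule.traceForm_lie_lie_self, horth v hv _ (hWinv _ hvw w hw), neg_zero]

/-- Let `L` be a finite-dimensional real Lie algebra with Killing form `B`, and let
`L = k ⊕ p` be a direct sum of subspaces with `⁅k,k⁆ ⊆ k`, `⁅k,p⁆ ⊆ p`, `⁅p,p⁆ ⊆ k`.
Assume `B` is anisotropic on `k`. If `V, W ⊆ p` are subspaces invariant under `ad_u` for every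
`u ∈ k` and orthogonal with respect to `B`, then `⁅v, w⁆ = 0` for all `v ∈ V`, `w ∈ W`. -/
theorem stmt8 {L : Type*} [LieRing L] [LieAlgebra ℝ L] [FiniteDimensional ℝ L]
    (k p : Submodule ℝ L) (hcompl : IsCompl k p)
    (hkk : ∀ x ∈ k, ∀ y ∈ k, ⁅x, y⁆ ∈ k)
    (hkp : ∀ x ∈ k, ∀ y ∈ p, ⁅x, y⁆ ∈ p)
    (hpp : ∀ x ∈ p, ∀ y ∈ p, ⁅x, y⁆ ∈ k)
    (haniso : ∀ x ∈ k, killingForm ℝ L x x = 0 → x = 0)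
    (V W : Submodule ℝ L) (hVp : V ≤ p) (hWp : W ≤ p)
    (hVinv : ∀ u ∈ k, ∀ v ∈ V, ⁅u, v⁆ ∈ V)
    (hWinv : ∀ u ∈ k, ∀ w ∈ W, ⁅u, w⁆ ∈ W)
    (horth : ∀ v ∈ V, ∀ w ∈ W, killingForm ℝ L v w = 0) :
    ∀ v ∈ V, ∀ w ∈ W, ⁅v, w⁆ = 0 :=
  stmt8_general k p hpp haniso V W hVp hWp hWinv horth
end

section
/- Let I be an open interval, t ∈ I, and λ₁, λ₂ : ℝ → V functions such that for every s ∈ I there exists g ∈ Γ with λ₂(s) = g·λ₁(s). If λ₁ and λ₂ are both differentiable at t, then there exists g ∈ Γ with λ₂(t) = g·λ₁(t) and λ₂′(t) = g·λ₁′(t). -/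
/-!
Near `t` every `s` has some `g` with `λ₂ s = g • λ₁ s`; since `Γ` is finite, one `g` works for
`s` arbitrarily close to `t`. Then `λ₂ - g • λ₁`, whose derivative at `t` is `v₂ - g • v₁`,
vanishes at points accumulating at `t`, so both its value and its derivative at `t` vanish.
-/

open Filter Topology

theorem HasDerivAt.eq_zero_of_frequently_eq_zero {𝕜 F : Type*} [NontriviallyNormedField 𝕜]
    [NormedAddCommGroup F] [NormedSpace 𝕜 F] {f : 𝕜 → F} {f' : F} {x : 𝕜}
    (hf : HasDerivAt f f' x) (h : ∃ᶠ y in 𝓝[≠] x, f y = 0) : f x = 0 ∧ f' = 0 :=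
  ⟨tendsto_nhds_unique_of_frequently_eq
      (hf.continuousAt.tendsto.mono_left nhdsWithin_le_nhds) tendsto_const_nhds h,
    hf.deriv ▸ deriv_zero_of_frequently_const h⟩

theorem stmt9_general {V : Type*} [NormedAddCommGroup V] [NormedSpace ℝ V] [FiniteDimensional ℝ V]
    {Γ : Type*} [Group Γ] [Finite Γ] [DistribMulAction Γ V] [SMulCommClass Γ ℝ V]
    (I : Set ℝ) (hIopen : IsOpen I) (t : ℝ) (ht : t ∈ I)
    (lam₁ lam₂ : ℝ → V) (v₁ v₂ : V)
    (hlift : ∀ s ∈ I, ∃ g : Γ, lam₂ s = g • lam₁ s)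
    (h₁ : HasDerivAt lam₁ v₁ t) (h₂ : HasDerivAt lam₂ v₂ t) :
    ∃ g : Γ, lam₂ t = g • lam₁ t ∧ v₂ = g • v₁ := by
  have hnear : ∀ᶠ s in 𝓝[≠] t, ∃ g : Γ, lam₂ s = g • lam₁ s :=
    eventually_nhdsWithin_of_eventually_nhds ((hIopen.eventually_mem ht).mono hlift)
  obtain ⟨g, hg⟩ := frequently_exists.1 hnear.frequently
  let L : V →L[ℝ] V := (DistribSMul.toLinearMap ℝ V g).toContinuousLinearMap
  have hdiff : HasDerivAt (fun s => lam₂ s - L (lam₁ s)) (v₂ - L v₁) t :=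
    h₂.sub (L.hasFDerivAt.comp_hasDerivAt t h₁)
  obtain ⟨hval, hder⟩ :=
    hdiff.eq_zero_of_frequently_eq_zero (hg.mono fun s hs => sub_eq_zero.2 hs)
  exact ⟨g, sub_eq_zero.1 hval, sub_eq_zero.1 hder⟩

/-- Let `Γ` be a finite group acting linearly on a finite-dimensional real normed vector space
`V`, let `I` be an open interval, `t ∈ I`, and let `λ₁, λ₂ : ℝ → V` be such that for every
`s ∈ I` there is `g ∈ Γ` with `λ₂ s = g • λ₁ s`. If `λ₁` and `λ₂` are differentiable at `t`
(with derivatives `v₁, v₂`), then there exists `g ∈ Γ` with `λ₂ t = g • λ₁ t` and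
`v₂ = g • v₁`. -/
theorem stmt9 {V : Type*} [NormedAddCommGroup V] [NormedSpace ℝ V] [FiniteDimensional ℝ V]
    {Γ : Type*} [Group Γ] [Finite Γ] [DistribMulAction Γ V] [SMulCommClass Γ ℝ V]
    (I : Set ℝ) (hIopen : IsOpen I) (hIconn : I.OrdConnected) (t : ℝ) (ht : t ∈ I)
    (lam₁ lam₂ : ℝ → V) (v₁ v₂ : V)
    (hlift : ∀ s ∈ I, ∃ g : Γ, lam₂ s = g • lam₁ s)
    (h₁ : HasDerivAt lam₁ v₁ t) (h₂ : HasDerivAt lam₂ v₂ t) :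
    ∃ g : Γ, lam₂ t = g • lam₁ t ∧ v₂ = g • v₁ :=
  stmt9_general I hIopen t ht lam₁ lam₂ v₁ v₂ hlift h₁ h₂
end

section
/- Let I be an open interval, t ∈ I, and λ, μ : ℝ → V functions that are continuous at t and such that for every s ∈ I there exists g ∈ Γ with μ(s) = g·λ(s). Then there exists an open interval I′ ⊆ I containing t such that: (a) whenever s ∈ I′ and g ∈ Γ satisfy μ(s) = g·λ(s), then also μ(t) = g·λ(t); and (b) if h ∈ Γ satisfies μ(t) = h·λ(t), then for every s ∈ I′ there exists g ∈ Γ with g·μ(t) = μ(t) and g·μ(s) = h·λ(s). -/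
open Filter Topology

theorem continuousConstSMul_of_finiteDimensional {V : Type*} [NormedAddCommGroup V]
    [NormedSpace ℝ V] [FiniteDimensional ℝ V] {Γ : Type*} [Monoid Γ] [DistribMulAction Γ V]
    [SMulCommClass Γ ℝ V] : ContinuousConstSMul Γ V :=
  ⟨fun g => (DistribSMul.toLinearMap ℝ V g).continuous_of_finiteDimensional⟩

/-- Only finitely many group elements are involved, and for each one with `μ t ≠ g • λ t` this
inequality persists near `t` by continuity. -/
theorem eventually_forall_smul_eq_imp_smul_eq {X V Γ : Type*} [TopologicalSpace X]
    [TopologicalSpace V] [T2Space V] [Group Γ] [Finite Γ] [MulAction Γ V]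
    [ContinuousConstSMul Γ V] {lam mu : X → V} {t : X} (hlam : ContinuousAt lam t)
    (hmu : ContinuousAt mu t) :
    ∀ᶠ s in 𝓝 t, ∀ g : Γ, mu s = g • lam s → mu t = g • lam t := by
  refine eventually_all.2 fun g => ?_
  by_cases hg : mu t = g • lam t
  · exact .of_forall fun _ _ => hg
  · filter_upwards [(hmu.ne_iff_eventually_ne (hlam.const_smul g)).1 hg] with s hs heq
    exact absurd heq hs

theorem exists_smul_eq_smul_and_smul_eq {V Γ : Type*} [Group Γ] [MulAction Γ V]
    {x y x' y' : V} {g h : Γ} (hg : y = g • x) (hg' : y' = g • x') (hh : y' = h • x') :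
    ∃ k : Γ, k • y' = y' ∧ k • y = h • x :=
  ⟨h * g⁻¹, by rw [mul_smul, hg', inv_smul_smul, ← hh, ← hg'], by
    rw [hg, mul_smul, inv_smul_smul]⟩

theorem stmt10_general {V : Type*} [NormedAddCommGroup V] [NormedSpace ℝ V] [FiniteDimensional ℝ V]
    {Γ : Type*} [Group Γ] [Finite Γ] [DistribMulAction Γ V] [SMulCommClass Γ ℝ V]
    (I : Set ℝ) (hIopen : IsOpen I) (t : ℝ) (ht : t ∈ I)
    (lam mu : ℝ → V) (hlam : ContinuousAt lam t) (hmu : ContinuousAt mu t)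
    (hlift : ∀ s ∈ I, ∃ g : Γ, mu s = g • lam s) :
    ∃ c d : ℝ, t ∈ Set.Ioo c d ∧ Set.Ioo c d ⊆ I ∧
      (∀ s ∈ Set.Ioo c d, ∀ g : Γ, mu s = g • lam s → mu t = g • lam t) ∧
      (∀ h : Γ, mu t = h • lam t →
        ∀ s ∈ Set.Ioo c d, ∃ g : Γ, g • mu t = mu t ∧ g • mu s = h • lam s) := by
  have := continuousConstSMul_of_finiteDimensional (V := V) (Γ := Γ)
  have hnear : ∀ᶠ s in 𝓝 t, (∀ g : Γ, mu s = g • lam s → mu t = g • lam t) ∧ s ∈ I :=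
    (eventually_forall_smul_eq_imp_smul_eq hlam hmu).and (hIopen.mem_nhds ht)
  obtain ⟨c, d, htcd, hcd⟩ := mem_nhds_iff_exists_Ioo_subset.1 hnear
  refine ⟨c, d, htcd, fun s hs => (hcd hs).2, fun s hs => (hcd hs).1, ?_⟩
  intro h hh s hs
  obtain ⟨g, hg⟩ := hlift s (hcd hs).2
  exact exists_smul_eq_smul_and_smul_eq hg ((hcd hs).1 g hg) hh

/-- Let `Γ` be a finite group acting linearly on a finite-dimensional real normed vector space
`V`, let `I` be an open interval, `t ∈ I`, and let `λ, μ : ℝ → V` be continuous at `t` with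
`μ s` in the `Γ`-orbit of `λ s` for all `s ∈ I`. Then there is an open interval
`I' = (c, d) ⊆ I` containing `t` such that: (a) whenever `s ∈ I'` and `μ s = g • λ s`, then
`μ t = g • λ t`; and (b) if `μ t = h • λ t`, then for every `s ∈ I'` there is `g ∈ Γ`
stabilizing `μ t` with `g • μ s = h • λ s`. -/
theorem stmt10 {V : Type*} [NormedAddCommGroup V] [NormedSpace ℝ V] [FiniteDimensional ℝ V]
    {Γ : Type*} [Group Γ] [Finite Γ] [DistribMulAction Γ V] [SMulCommClass Γ ℝ V]
    (I : Set ℝ) (hIopen : IsOpen I) (hIconn : I.OrdConnected) (t : ℝ) (ht : t ∈ I)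
    (lam mu : ℝ → V) (hlam : ContinuousAt lam t) (hmu : ContinuousAt mu t)
    (hlift : ∀ s ∈ I, ∃ g : Γ, mu s = g • lam s) :
    ∃ c d : ℝ, t ∈ Set.Ioo c d ∧ Set.Ioo c d ⊆ I ∧
      (∀ s ∈ Set.Ioo c d, ∀ g : Γ, mu s = g • lam s → mu t = g • lam t) ∧
      (∀ h : Γ, mu t = h • lam t →
        ∀ s ∈ Set.Ioo c d, ∃ g : Γ, g • mu t = mu t ∧ g • mu s = h • lam s) :=
  stmt10_general I hIopen t ht lam mu hlam hmu hlift
end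

section
/- Let t ∈ ℝ and ε > 0. Let μ : ℝ → V be differentiable at t, and let λ : ℝ → V be continuous on (t−ε, t+ε) and such that for every s ∈ (t−ε, t+ε) there exists g ∈ Γ with λ(s) = g·μ(s). Then λ admits a right derivative and a left derivative at t belonging to the Γ-orbit of (μ(t), μ′(t)): there exist g₊, g₋ ∈ Γ such that λ(t) = g₊·μ(t), λ(t) = g₋·μ(t), λ has derivative g₊·μ′(t) at t from within [t, ∞), and λ has derivative g₋·μ′(t) at t from within (−∞, t]. -/
/-!
By continuity, for `s` near `t` the relation `λ s = g • μ s` can only hold for those `g` with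
`λ t = g • μ t`. For such `g` the difference quotient of `λ` at `t` is `g` applied to that of `μ`,
so on either side of `t` it approaches the finite set `{g • μ' t | λ t = g • μ t}`. Being
continuous on the connected intervals `(t, t + δ)` and `(t - δ, t)`, it cannot jump between the
points of this finite set, hence converges to one of them.
-/

open Set Filter Topology

theorem IsPreconnected.subset_of_subset_biUnion {α ι : Type*} [TopologicalSpace α] {s : Set α}
    {W : Set ι} {U : ι → Set α} (hs : IsPreconnected s) (hU : ∀ w, IsOpen (U w))
    (hdisj : W.PairwiseDisjoint U) (hsub : s ⊆ ⋃ w ∈ W, U w) {w₀ : ι} (hw₀ : w₀ ∈ W)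
    (hmeet : (s ∩ U w₀).Nonempty) : s ⊆ U w₀ := by
  refine hs.subset_left_of_subset_union (v := ⋃ w ∈ W \ {w₀}, U w) (hU w₀)
    (isOpen_biUnion fun w _ => hU w) ?_ ?_ hmeet
  · exact disjoint_iUnion₂_right.2 fun w hw => hdisj hw₀ hw.1 (Ne.symm hw.2)
  · intro x hx
    obtain ⟨w, hw, hxw⟩ := mem_iUnion₂.1 (hsub hx)
    rcases eq_or_ne w w₀ with rfl | hne
    · exact Or.inl hxw
    · exact Or.inr (mem_iUnion₂.2 ⟨w, ⟨hw, hne⟩, hxw⟩)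

theorem Filter.HasBasis.exists_tendsto_nhds_of_tendsto_nhdsSet {α X ι : Type*}
    [TopologicalSpace α] [TopologicalSpace X] [T2Space X] {l : Filter α} [l.NeBot]
    {p : ι → Prop} {B : ι → Set α} (hl : l.HasBasis p B) (hB : ∀ i, p i → IsPreconnected (B i))
    {f : α → X} {U : Set α} (hU : U ∈ l) (hf : ContinuousOn f U) {W : Set X} (hW : W.Finite)
    (h : Tendsto f l (𝓝ˢ W)) : ∃ w ∈ W, Tendsto f l (𝓝 w) := by
  obtain ⟨O, hO, hdisj⟩ := hW.t2_separation
  have hOnhds : ∀ w, O w ∈ 𝓝 w := fun w => (hO w).2.mem_nhds (hO w).1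
  have hcover : ⋃ w ∈ W, O w ∈ 𝓝ˢ W :=
    mem_nhdsSet_iff_forall.2 fun w hw => mem_of_superset (hOnhds w) (subset_biUnion_of_mem hw)
  obtain ⟨i, hi, hiB⟩ := hl.mem_iff.1 (inter_mem hU (h hcover))
  obtain ⟨a, ha⟩ := nonempty_of_mem (hl.mem_of_mem hi)
  obtain ⟨w₀, hw₀, haw₀⟩ := mem_iUnion₂.1 (hiB ha).2
  have himage : f '' B i ⊆ O w₀ :=
    ((hB i hi).image f (hf.mono fun x hx => (hiB hx).1)).subset_of_subset_biUnion
      (fun w => (hO w).2) hdisj (image_subset_iff.2 fun x hx => (hiB hx).2) hw₀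
      ⟨f a, mem_image_of_mem f ha, haw₀⟩
  refine ⟨w₀, hw₀, fun N hN => mem_map.2 ?_⟩
  -- Enlarged by the other separating sets, `N` becomes a neighbourhood of `W`; `himage` then
  -- rules the enlargement out.
  have hN' : N ∪ ⋃ w ∈ W \ {w₀}, O w ∈ 𝓝ˢ W := by
    refine mem_nhdsSet_iff_forall.2 fun w hw => ?_
    rcases eq_or_ne w w₀ with rfl | hne
    · exact mem_of_superset hN subset_union_left
    · exact mem_of_superset (hOnhds w)
        (subset_union_of_subset_right
          (subset_biUnion_of_mem (u := O) (show w ∈ W \ {w₀} from ⟨hw, hne⟩)) _)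
  filter_upwards [h.eventually_mem hN', hl.mem_of_mem hi] with x hxN hxB
  refine hxN.resolve_right fun hx => ?_
  obtain ⟨w, hw, hxw⟩ := mem_iUnion₂.1 hx
  exact disjoint_left.1 (hdisj hw₀ hw.1 (Ne.symm hw.2)) (himage (mem_image_of_mem f hxB)) hxw

theorem continuousConstSMul_of_finiteDimensional_s11 (𝕜 : Type*) {M E : Type*}
    [NontriviallyNormedField 𝕜] [CompleteSpace 𝕜] [Monoid M] [AddCommGroup E] [Module 𝕜 E]
    [TopologicalSpace E] [IsTopologicalAddGroup E] [ContinuousSMul 𝕜 E] [T2Space E]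
    [FiniteDimensional 𝕜 E] [DistribMulAction M E] [SMulCommClass M 𝕜 E] :
    ContinuousConstSMul M E :=
  ⟨fun m => (DistribSMul.toLinearMap 𝕜 E m).continuous_of_finiteDimensional⟩

theorem eventually_exists_smul_eq_of_continuousAt {α X M : Type*} [TopologicalSpace α]
    [TopologicalSpace X] [T2Space X] [Monoid M] [Finite M] [MulAction M X]
    [ContinuousConstSMul M X] {f g : α → X} {x : α} (hf : ContinuousAt f x)
    (hg : ContinuousAt g x) (h : ∀ᶠ y in 𝓝 x, ∃ m : M, f y = m • g y) :
    ∀ᶠ y in 𝓝 x, ∃ m : M, f x = m • g x ∧ f y = m • g y := by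
  have hne : ∀ m : M, ∀ᶠ y in 𝓝 x, f x ≠ m • g x → f y ≠ m • g y := fun m => by
    by_cases hm : f x = m • g x
    · exact .of_forall fun _ h => absurd hm h
    · exact ((hf.ne_iff_eventually_ne (hg.const_smul m)).1 hm).mono fun _ h _ => h
  filter_upwards [h, eventually_all.2 hne] with y ⟨m, hm⟩ hy
  exact ⟨m, not_not.1 fun hmx => hy m hmx hm, hm⟩

theorem slope_eq_smul_slope_of_eq_smul {k E M : Type*} [Field k] [AddCommGroup E] [Module k E]
    [Monoid M] [DistribMulAction M E] [SMulCommClass M k E] {f g : k → E} {m : M} {a b : k}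
    (ha : f a = m • g a) (hb : f b = m • g b) : slope f a b = m • slope g a b := by
  simp only [slope_def_module, ha, hb, ← smul_sub, smul_comm]

theorem exists_hasDerivWithinAt_smul_of_eq_smul {V Γ ι : Type*} [NormedAddCommGroup V]
    [NormedSpace ℝ V] [FiniteDimensional ℝ V] [Monoid Γ] [Finite Γ] [DistribMulAction Γ V]
    [SMulCommClass Γ ℝ V] {t : ℝ} {S : Set ℝ} (htS : t ∉ S) [(𝓝[S] t).NeBot]
    {p : ι → Prop} {B : ι → Set ℝ} (hS : (𝓝[S] t).HasBasis p B)
    (hB : ∀ i, p i → IsPreconnected (B i)) {mu lam : ℝ → V} {v : V} {U : Set ℝ}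
    (hU : U ∈ 𝓝 t) (hmu : HasDerivAt mu v t) (hlam : ContinuousOn lam U)
    (hlift : ∀ s ∈ U, ∃ g : Γ, lam s = g • mu s) :
    ∃ g : Γ, lam t = g • mu t ∧ HasDerivWithinAt lam (g • v) S t := by
  have := continuousConstSMul_of_finiteDimensional_s11 ℝ (M := Γ) (E := V)
  have hslope : ∀ᶠ s in 𝓝[S] t, ∃ g : Γ, lam t = g • mu t ∧ slope lam t s = g • slope mu t s := by
    filter_upwards [nhdsWithin_le_nhds (eventually_exists_smul_eq_of_continuousAt
      (hlam.continuousAt hU) hmu.continuousAt (eventually_of_mem hU hlift))]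
      with s ⟨g, ht, hs⟩ using ⟨g, ht, slope_eq_smul_slope_of_eq_smul ht hs⟩
  have hmu' : Tendsto (slope mu t) (𝓝[S] t) (𝓝 v) :=
    (hasDerivAt_iff_tendsto_slope.1 hmu).mono_left
      (nhdsWithin_mono t (subset_compl_singleton_iff.2 htS))
  set W := (· • v) '' {g : Γ | lam t = g • mu t}
  have hW : Tendsto (slope lam t) (𝓝[S] t) (𝓝ˢ W) := by
    refine fun N hN => mem_map.2 ?_
    have hN' : ∀ g : Γ, ∀ᶠ s in 𝓝[S] t, lam t = g • mu t → g • slope mu t s ∈ N := fun g => by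
      by_cases ht : lam t = g • mu t
      · exact ((hmu'.const_smul g).eventually_mem
          (mem_nhdsSet_iff_forall.1 hN _ ⟨g, ht, rfl⟩)).mono fun _ h _ => h
      · exact .of_forall fun _ h => absurd h ht
    filter_upwards [hslope, eventually_all.2 hN'] with s ⟨g, ht, hs⟩ hsN
    rw [mem_preimage, hs]
    exact hsN g ht
  have hcont : ContinuousOn (slope lam t) (S ∩ U) := by
    rw [show slope lam t = fun s => (s - t)⁻¹ • (lam s - lam t) from
      funext (slope_def_module lam t)]
    exact ((continuousOn_id.sub continuousOn_const).inv₀ fun s hs =>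
      sub_ne_zero.2 (ne_of_mem_of_not_mem hs.1 htS)).smul
      ((hlam.mono inter_subset_right).sub continuousOn_const)
  obtain ⟨_, ⟨g, ht, rfl⟩, hg⟩ := hS.exists_tendsto_nhds_of_tendsto_nhdsSet hB
    (inter_mem_nhdsWithin S hU) hcont ((toFinite _).image _) hW
  exact ⟨g, ht, (hasDerivWithinAt_iff_tendsto_slope' htS).2 hg⟩

/-- Let `Γ` be a finite group acting linearly on a finite-dimensional real normed vector space
`V`. Let `μ : ℝ → V` be differentiable at `t` (with derivative `v`), and let `λ : ℝ → V` be
continuous on `(t-ε, t+ε)` with `λ s` in the `Γ`-orbit of `μ s` for all `s ∈ (t-ε, t+ε)`.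
Then `λ` admits one-sided derivatives at `t` in the `Γ`-orbit of `(μ t, v)`: there exist
`g₊, g₋ ∈ Γ` with `λ t = g₊ • μ t`, `λ t = g₋ • μ t`, `λ` has derivative `g₊ • v` at `t` from
within `[t, ∞)`, and derivative `g₋ • v` at `t` from within `(-∞, t]`. -/
theorem stmt11 {V : Type*} [NormedAddCommGroup V] [NormedSpace ℝ V] [FiniteDimensional ℝ V]
    {Γ : Type*} [Group Γ] [Finite Γ] [DistribMulAction Γ V] [SMulCommClass Γ ℝ V]
    (t ε : ℝ) (hε : 0 < ε) (mu lam : ℝ → V) (v : V)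
    (hmu : HasDerivAt mu v t)
    (hlam : ContinuousOn lam (Set.Ioo (t - ε) (t + ε)))
    (hlift : ∀ s ∈ Set.Ioo (t - ε) (t + ε), ∃ g : Γ, lam s = g • mu s) :
    ∃ gp gm : Γ, lam t = gp • mu t ∧ lam t = gm • mu t ∧
      HasDerivWithinAt lam (gp • v) (Set.Ici t) t ∧
      HasDerivWithinAt lam (gm • v) (Set.Iic t) t := by
  have hU : Ioo (t - ε) (t + ε) ∈ 𝓝 t := Ioo_mem_nhds (by linarith) (by linarith)
  obtain ⟨gp, hp, hderp⟩ := exists_hasDerivWithinAt_smul_of_eq_smul self_notMem_Ioi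
    (nhdsGT_basis t) (fun _ _ => isPreconnected_Ioo) hU hmu hlam hlift
  obtain ⟨gm, hm, hderm⟩ := exists_hasDerivWithinAt_smul_of_eq_smul self_notMem_Iio
    (nhdsLT_basis t) (fun _ _ => isPreconnected_Ioo) hU hmu hlam hlift
  exact ⟨gp, gm, hp, hm, hasDerivWithinAt_Ioi_iff_Ici.1 hderp, hasDerivWithinAt_Iio_iff_Iic.1 hderm⟩
end

section
/- Let I be an open interval and (I_j)_{j∈J} a family of open intervals whose union equals I. Let ξ : ℝ → V/Γ be a function such that for every j ∈ J there exists λ_j : ℝ → V which is continuously differentiable (C¹) on I_j and satisfies π(λ_j(s)) = ξ(s) for all s ∈ I_j. Then there exists λ : ℝ → V which is continuously differentiable on I and satisfies π(λ(s)) = ξ(s) for all s ∈ I. -/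
/-!
Two `C¹` lifts `f`, `g` of `ξ` near a point `s` are related at each point of a punctured
neighbourhood by some element of the finite group `Γ`, so a single `γ` relates them at points
accumulating at `s`; hence `f s = γ • g s` and `f' s = γ • g' s`. Continuing `f` past `s` by
`γ • g` therefore gives a `C¹` lift again. With a Lebesgue number this continues a lift near a
compact interval to any larger compact interval inside `I` without changing it on the smaller
one, and exhausting `I` by compact intervals yields a coherent sequence of lifts whose limit is
the required lift on `I`.
-/

open Set Filter Topology MulAction

theorem HasDerivAt.eq_and_eq_of_frequently_eq {E : Type*} [NormedAddCommGroup E]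
    [NormedSpace ℝ E] {f g : ℝ → E} {f' g' : E} {s : ℝ} (hf : HasDerivAt f f' s)
    (hg : HasDerivAt g g' s) (hfg : ∃ᶠ t in 𝓝[≠] s, f t = g t) : f s = g s ∧ f' = g' := by
  have hval : f s = g s :=
    tendsto_nhds_unique_of_frequently_eq (hf.continuousAt.mono_left nhdsWithin_le_nhds)
      (hg.continuousAt.mono_left nhdsWithin_le_nhds) hfg
  refine ⟨hval, tendsto_nhds_unique_of_frequently_eq (hasDerivAt_iff_tendsto_slope.1 hf)
    (hasDerivAt_iff_tendsto_slope.1 hg) (hfg.mono fun t ht => ?_)⟩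
  simp only [slope_def_module, ht, hval]

theorem HasDerivAt.piecewise_Iic {E : Type*} [NormedAddCommGroup E] [NormedSpace ℝ E]
    {f g : ℝ → E} {f' : E} {s : ℝ} (hf : HasDerivAt f f' s) (hg : HasDerivAt g f' s)
    (hfg : f s = g s) : HasDerivAt ((Iic s).piecewise f g) f' s := by
  have hs : (Iic s).piecewise f g s = g s := by simp [hfg]
  have hleft : HasDerivWithinAt ((Iic s).piecewise f g) f' (Iic s) s :=
    hf.hasDerivWithinAt.congr (piecewise_eqOn _ f g) (hs.trans hfg.symm)
  have hright : HasDerivWithinAt ((Iic s).piecewise f g) f' (Ici s) s := by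
    refine hg.hasDerivWithinAt.congr (fun t ht => ?_) hs
    rcases (mem_Ici.1 ht).eq_or_lt with rfl | h
    · exact hs
    · exact piecewise_eq_of_notMem _ _ _ (notMem_Iic.2 h)
  simpa [Iic_union_Ici] using hleft.union hright

theorem isOpen_ite_Iic {U V : Set ℝ} {s : ℝ} (hU : IsOpen U) (hV : IsOpen V) (hsU : s ∈ U)
    (hsV : s ∈ V) : IsOpen ((Iic s).ite U V) := by
  have : (Iic s).ite U V = U ∩ Iio s ∪ U ∩ V ∪ V ∩ Ioi s := by
    ext t
    simp only [Set.ite, mem_union, mem_inter_iff, Set.mem_sdiff, mem_Iic, mem_Iio, mem_Ioi]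
    rcases lt_trichotomy t s with h | rfl | h <;> grind
  rw [this]
  exact ((hU.inter isOpen_Iio).union (hU.inter hV)).union (hV.inter isOpen_Ioi)

theorem Icc_subset_ite_Iic {U V : Set ℝ} {x s y : ℝ} (hU : Icc x s ⊆ U) (hV : Icc s y ⊆ V) :
    Icc x y ⊆ (Iic s).ite U V := by
  intro t ht
  rcases le_or_gt t s with hts | hts
  · exact Or.inl ⟨hU ⟨ht.1, hts⟩, hts⟩
  · exact Or.inr ⟨hV ⟨hts.le, ht.2⟩, not_le.2 hts⟩

theorem ContDiffOn.piecewise_Iic {E : Type*} [NormedAddCommGroup E] [NormedSpace ℝ E]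
    {f g : ℝ → E} {U V : Set ℝ} {s : ℝ} (hU : IsOpen U) (hV : IsOpen V)
    (hf : ContDiffOn ℝ 1 f U) (hg : ContDiffOn ℝ 1 g V) (hsU : s ∈ U) (hsV : s ∈ V)
    (hfg : f s = g s) (hfg' : deriv f s = deriv g s) :
    ContDiffOn ℝ 1 ((Iic s).piecewise f g) ((Iic s).ite U V) := by
  have hdf : ∀ t ∈ U, HasDerivAt f (deriv f t) t := fun t ht =>
    ((hf.contDiffAt (hU.mem_nhds ht)).differentiableAt one_ne_zero).hasDerivAt
  have hdg : ∀ t ∈ V, HasDerivAt g (deriv g t) t := fun t ht =>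
    ((hg.contDiffAt (hV.mem_nhds ht)).differentiableAt one_ne_zero).hasDerivAt
  have hderiv : ∀ t ∈ (Iic s).ite U V,
      HasDerivAt ((Iic s).piecewise f g) ((Iic s).piecewise (deriv f) (deriv g) t) t := by
    rintro t (⟨htU, hts⟩ | ⟨htV, hts⟩)
    · rw [piecewise_eq_of_mem _ _ _ hts]
      rcases (mem_Iic.1 hts).lt_or_eq with h | rfl
      · exact (hdf t htU).congr_of_eventuallyEq <| eventually_of_mem (Iio_mem_nhds h)
          fun u hu => piecewise_eq_of_mem _ _ _ (mem_Iic.2 hu.le)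
      · exact (hdf t htU).piecewise_Iic (hfg' ▸ hdg t hsV) hfg
    · rw [piecewise_eq_of_notMem _ _ _ hts]
      exact (hdg t htV).congr_of_eventuallyEq <| eventually_of_mem
        (Ioi_mem_nhds (not_le.1 hts)) fun u hu => piecewise_eq_of_notMem _ _ _ (notMem_Iic.2 hu)
  have hcont : ContinuousOn ((Iic s).piecewise (deriv f) (deriv g)) ((Iic s).ite U V) :=
    continuousOn_piecewise_ite (hf.continuousOn_deriv_of_isOpen hU le_rfl)
      (hg.continuousOn_deriv_of_isOpen hV le_rfl) (by simp [hsU, hsV])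
      (by simp only [frontier_Iic]; rintro _ ⟨-, rfl⟩; exact hfg')
  rw [show (1 : WithTop ℕ∞) = 0 + 1 from rfl,
    contDiffOn_succ_iff_deriv_of_isOpen (isOpen_ite_Iic hU hV hsU hsV)]
  refine ⟨fun t ht => (hderiv t ht).differentiableAt.differentiableWithinAt, by simp, ?_⟩
  exact contDiffOn_zero.2 (hcont.congr fun t ht => (hderiv t ht).deriv)

theorem Set.OrdConnected.exists_Icc_exhaustion {I : Set ℝ} (hIo : IsOpen I)
    (hIc : I.OrdConnected) (hI : I.Nonempty) :
    ∃ a b : ℕ → ℝ, Antitone a ∧ Monotone b ∧ (∀ n, a n ≤ b n) ∧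
      (∀ n, Icc (a n) (b n) ⊆ I) ∧ I ⊆ ⋃ n, Ioo (a n) (b n) := by
  have : Nonempty I := hI.to_subtype
  obtain ⟨u, hu⟩ := TopologicalSpace.exists_dense_seq I
  set a : ℕ → ℝ := fun n => (Finset.range (n + 1)).inf' Finset.nonempty_range_add_one (u ·)
  set b : ℕ → ℝ := fun n => (Finset.range (n + 1)).sup' Finset.nonempty_range_add_one (u ·)
  have hua : ∀ k n, k ≤ n → a n ≤ u k := fun k n hk =>
    Finset.inf'_le _ (Finset.mem_range_succ_iff.2 hk)
  have hub : ∀ k n, k ≤ n → u k ≤ b n := fun k n hk =>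
    Finset.le_sup' (u · : ℕ → ℝ) (Finset.mem_range_succ_iff.2 hk)
  have haI : ∀ n, a n ∈ I := fun n => by
    obtain ⟨k, -, hk⟩ := Finset.exists_mem_eq_inf' (Finset.nonempty_range_add_one (n := n))
      (u · : ℕ → ℝ)
    simpa only [a, hk] using (u k).2
  have hbI : ∀ n, b n ∈ I := fun n => by
    obtain ⟨k, -, hk⟩ := Finset.exists_mem_eq_sup' (Finset.nonempty_range_add_one (n := n))
      (u · : ℕ → ℝ)
    simpa only [b, hk] using (u k).2
  have hbetween : ∀ t ∈ I, ∃ j k, (u j : ℝ) < t ∧ t < u k := by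
    intro t ht
    obtain ⟨ε, hε, hball⟩ := Metric.isOpen_iff.1 hIo t ht
    rw [Real.ball_eq_Ioo] at hball
    obtain ⟨j, hj⟩ := hu.exists_mem_open (isOpen_Iio.preimage continuous_subtype_val)
      ⟨⟨t - ε / 2, hball ⟨by linarith, by linarith⟩⟩, show t - ε / 2 < t by linarith⟩
    obtain ⟨k, hk⟩ := hu.exists_mem_open (isOpen_Ioi.preimage continuous_subtype_val)
      ⟨⟨t + ε / 2, hball ⟨by linarith, by linarith⟩⟩, show t < t + ε / 2 by linarith⟩
    exact ⟨j, k, hj, hk⟩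
  refine ⟨a, b, fun m n hmn => Finset.inf'_mono _ (Finset.range_subset_range.2 (by omega)) _,
    fun m n hmn => Finset.sup'_mono _ (Finset.range_subset_range.2 (by omega)) _,
    fun n => (hua 0 n n.zero_le).trans (hub 0 n n.zero_le),
    fun n => hIc.out (haI n) (hbI n), fun t ht => ?_⟩
  obtain ⟨j, k, hj, hk⟩ := hbetween t ht
  exact mem_iUnion.2 ⟨max j k, (hua j _ (le_max_left j k)).trans_lt hj,
    hk.trans_le (hub k _ (le_max_right j k))⟩

theorem exists_eqOn_of_eqOn_succ {α β : Type*} {K : ℕ → Set α} (hK : Monotone K)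
    {f : ℕ → α → β} (hf : ∀ n, EqOn (f (n + 1)) (f n) (K n)) :
    ∃ F : α → β, ∀ n, EqOn F (f n) (K n) := by
  classical
  have hchain : ∀ m n, m ≤ n → EqOn (f n) (f m) (K m) := by
    intro m n hmn
    induction n, hmn using Nat.le_induction with
    | base => exact fun _ _ => rfl
    | succ n hmn ih => exact fun t ht => (hf n (hK hmn ht)).trans (ih ht)
  refine ⟨fun t => if h : ∃ n, t ∈ K n then f (Nat.find h) t else f 0 t, fun n t ht => ?_⟩
  have h : ∃ n, t ∈ K n := ⟨n, ht⟩
  simp only [dif_pos h]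
  exact (hchain _ n (Nat.find_min' h ht) (Nat.find_spec h)).symm

section Lifts

variable {V : Type*} [NormedAddCommGroup V] [NormedSpace ℝ V] {Γ : Type*} [Group Γ]

def IsC1LiftOn [MulAction Γ V] (ξ : ℝ → Quotient (orbitRel Γ V)) (f : ℝ → V) (U : Set ℝ) :
    Prop :=
  ContDiffOn ℝ 1 f U ∧ ∀ t ∈ U, Quotient.mk (orbitRel Γ V) (f t) = ξ t

def IsC1LiftNear [MulAction Γ V] (ξ : ℝ → Quotient (orbitRel Γ V)) (f : ℝ → V) (K : Set ℝ) :
    Prop :=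
  ∃ U, IsOpen U ∧ K ⊆ U ∧ IsC1LiftOn ξ f U

section MulAction

variable [MulAction Γ V] {ξ : ℝ → Quotient (orbitRel Γ V)} {f g : ℝ → V} {U W : Set ℝ}

theorem IsC1LiftOn.mono (hf : IsC1LiftOn ξ f U) (hWU : W ⊆ U) : IsC1LiftOn ξ f W :=
  ⟨hf.1.mono hWU, fun t ht => hf.2 t (hWU ht)⟩

theorem IsC1LiftOn.congr (hf : IsC1LiftOn ξ f U) (hgf : EqOn g f U) : IsC1LiftOn ξ g U :=
  ⟨hf.1.congr hgf, fun t ht => hgf ht ▸ hf.2 t ht⟩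

theorem IsC1LiftNear.mono {K L : Set ℝ} (hf : IsC1LiftNear ξ f K) (hLK : L ⊆ K) :
    IsC1LiftNear ξ f L :=
  let ⟨U, hU, hKU, hfU⟩ := hf
  ⟨U, hU, hLK.trans hKU, hfU⟩

theorem IsC1LiftOn.piecewise_Iic (hf : IsC1LiftOn ξ f U) (hg : IsC1LiftOn ξ g W)
    (hU : IsOpen U) (hW : IsOpen W) {s : ℝ} (hsU : s ∈ U) (hsW : s ∈ W) (hfg : f s = g s)
    (hfg' : deriv f s = deriv g s) :
    IsC1LiftOn ξ ((Iic s).piecewise f g) ((Iic s).ite U W) := by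
  refine ⟨hf.1.piecewise_Iic hU hW hg.1 hsU hsW hfg hfg', ?_⟩
  rintro t (⟨htU, hts⟩ | ⟨htW, hts⟩)
  · rw [piecewise_eq_of_mem _ _ _ hts]; exact hf.2 t htU
  · rw [piecewise_eq_of_notMem _ _ _ hts]; exact hg.2 t htW

theorem exists_pos_forall_isC1LiftNear {ι : Type*} {W : ι → Set ℝ} (hWo : ∀ i, IsOpen (W i))
    (hW : ∀ i, ∃ μ, IsC1LiftOn ξ μ (W i)) {a b : ℝ} (hab : Icc a b ⊆ ⋃ i, W i) :
    ∃ r > 0, ∀ x ∈ Icc a b, ∃ μ, IsC1LiftNear ξ μ (Icc (x - r) (x + r)) := by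
  obtain ⟨δ, hδ, hball⟩ := lebesgue_number_lemma_of_metric isCompact_Icc hWo hab
  refine ⟨δ / 2, half_pos hδ, fun x hx => ?_⟩
  obtain ⟨i, hi⟩ := hball x hx
  obtain ⟨μ, hμ⟩ := hW i
  refine ⟨μ, Metric.ball x δ, Metric.isOpen_ball, ?_, hμ.mono hi⟩
  rw [← Real.closedBall_eq_Icc]
  exact Metric.closedBall_subset_ball (half_lt_self hδ)

theorem exists_isC1LiftOn_of_exhaustion {a b : ℕ → ℝ} (ha : Antitone a) (hb : Monotone b)
    (h₀ : ∃ f, IsC1LiftNear ξ f (Icc (a 0) (b 0)))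
    (hstep : ∀ n f, IsC1LiftNear ξ f (Icc (a n) (b n)) →
      ∃ f', IsC1LiftNear ξ f' (Icc (a (n + 1)) (b (n + 1))) ∧ EqOn f' f (Icc (a n) (b n))) :
    ∃ lam, IsC1LiftOn ξ lam (⋃ n, Ioo (a n) (b n)) := by
  obtain ⟨f₀, hf₀⟩ := h₀
  choose! F hF hFf using hstep
  let f : ℕ → ℝ → V := fun n => Nat.rec f₀ F n
  have hf : ∀ n, IsC1LiftNear ξ (f n) (Icc (a n) (b n)) := fun n =>
    Nat.rec hf₀ (fun n ih => hF n _ ih) n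
  obtain ⟨lam, hlam⟩ := exists_eqOn_of_eqOn_succ (K := fun n => Icc (a n) (b n)) (f := f)
    (fun _ _ h => Icc_subset_Icc (ha h) (hb h)) fun n => hFf n _ (hf n)
  have hlift : ∀ n, IsC1LiftOn ξ lam (Ioo (a n) (b n)) := fun n =>
    let ⟨_, _, hKU, hfU⟩ := hf n
    (hfU.mono (Ioo_subset_Icc_self.trans hKU)).congr fun _ ht => hlam n (Ioo_subset_Icc_self ht)
  refine ⟨lam, contDiffOn_of_locally_contDiffOn fun t ht => ?_, fun t ht => ?_⟩
  · obtain ⟨n, hn⟩ := mem_iUnion.1 ht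
    exact ⟨_, isOpen_Ioo, hn, (hlift n).1.mono inter_subset_right⟩
  · obtain ⟨n, hn⟩ := mem_iUnion.1 ht
    exact (hlift n).2 t hn

end MulAction

variable [DistribMulAction Γ V] [SMulCommClass ℝ Γ V] [ContinuousConstSMul Γ V]
  {ξ : ℝ → Quotient (orbitRel Γ V)} {f g : ℝ → V} {U W : Set ℝ}

theorem IsC1LiftOn.const_smul (hf : IsC1LiftOn ξ f U) (γ : Γ) :
    IsC1LiftOn ξ (fun t => γ • f t) U :=
  ⟨hf.1.const_smul γ, fun t ht => by rw [orbitRel.Quotient.quotient_smul_eq, hf.2 t ht]⟩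

variable [Finite Γ]

theorem IsC1LiftOn.exists_isC1LiftOn_eq_deriv_eq (hf : IsC1LiftOn ξ f U)
    (hg : IsC1LiftOn ξ g W) {s : ℝ} (hU : U ∈ 𝓝 s) (hW : W ∈ 𝓝 s) :
    ∃ g' : ℝ → V, IsC1LiftOn ξ g' W ∧ f s = g' s ∧ deriv f s = deriv g' s := by
  have hrel : ∃ᶠ t in 𝓝[≠] s, ∃ γ : Γ, f t = γ • g t := by
    refine (eventually_nhdsWithin_of_eventually_nhds (inter_mem hU hW)).frequently.mono ?_
    intro t ⟨htU, htW⟩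
    have : Quotient.mk (orbitRel Γ V) (f t) = Quotient.mk (orbitRel Γ V) (g t) := by
      rw [hf.2 t htU, hg.2 t htW]
    obtain ⟨γ, hγ⟩ := Quotient.eq.1 this
    exact ⟨γ, hγ.symm⟩
  obtain ⟨γ, hγ⟩ := frequently_exists.1 hrel
  have hdf := ((hf.1.contDiffAt hU).differentiableAt one_ne_zero).hasDerivAt
  have hdg := ((hg.1.contDiffAt hW).differentiableAt one_ne_zero).hasDerivAt.const_smul γ
  obtain ⟨hval, hder⟩ := hdf.eq_and_eq_of_frequently_eq hdg hγ
  exact ⟨_, hg.const_smul γ, hval, hder.trans hdg.deriv.symm⟩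

theorem IsC1LiftNear.exists_glue_eqOn_Iic {x s y : ℝ} (hf : IsC1LiftNear ξ f (Icc x s))
    (hg : IsC1LiftNear ξ g (Icc s y)) (hxs : x ≤ s) (hsy : s ≤ y) :
    ∃ F, IsC1LiftNear ξ F (Icc x y) ∧ EqOn F f (Iic s) := by
  obtain ⟨U, hU, hxsU, hfU⟩ := hf
  obtain ⟨W, hW, hsyW, hgW⟩ := hg
  have hsU : s ∈ U := hxsU ⟨hxs, le_rfl⟩
  have hsW : s ∈ W := hsyW ⟨le_rfl, hsy⟩
  obtain ⟨g', hg'W, hval, hder⟩ :=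
    hfU.exists_isC1LiftOn_eq_deriv_eq hgW (hU.mem_nhds hsU) (hW.mem_nhds hsW)
  exact ⟨_, ⟨_, isOpen_ite_Iic hU hW hsU hsW, Icc_subset_ite_Iic hxsU hsyW,
    hfU.piecewise_Iic hg'W hU hW hsU hsW hval hder⟩, piecewise_eqOn _ _ _⟩

theorem IsC1LiftNear.exists_glue_eqOn_Ici {x s y : ℝ} (hf : IsC1LiftNear ξ f (Icc x s))
    (hg : IsC1LiftNear ξ g (Icc s y)) (hxs : x ≤ s) (hsy : s ≤ y) :
    ∃ F, IsC1LiftNear ξ F (Icc x y) ∧ EqOn F g (Ici s) := by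
  obtain ⟨U, hU, hxsU, hfU⟩ := hf
  obtain ⟨W, hW, hsyW, hgW⟩ := hg
  have hsU : s ∈ U := hxsU ⟨hxs, le_rfl⟩
  have hsW : s ∈ W := hsyW ⟨le_rfl, hsy⟩
  obtain ⟨f', hf'U, hval, hder⟩ :=
    hgW.exists_isC1LiftOn_eq_deriv_eq hfU (hW.mem_nhds hsW) (hU.mem_nhds hsU)
  refine ⟨_, ⟨_, isOpen_ite_Iic hU hW hsU hsW, Icc_subset_ite_Iic hxsU hsyW,
    hf'U.piecewise_Iic hgW hU hW hsU hsW hval.symm hder.symm⟩, fun t ht => ?_⟩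
  rcases (mem_Ici.1 ht).eq_or_lt with rfl | hst
  · simp [hval]
  · exact piecewise_eq_of_notMem _ _ _ (not_le.2 hst)

theorem IsC1LiftNear.exists_glue_Icc {μ ν : ℝ → V} {x' x y y' : ℝ}
    (hf : IsC1LiftNear ξ f (Icc x y)) (hμ : IsC1LiftNear ξ μ (Icc x' x))
    (hν : IsC1LiftNear ξ ν (Icc y y')) (hx : x' ≤ x) (hxy : x ≤ y) (hy : y ≤ y') :
    ∃ F, IsC1LiftNear ξ F (Icc x' y') ∧ EqOn F f (Icc x y) := by
  obtain ⟨F₁, hF₁, hF₁f⟩ := hf.exists_glue_eqOn_Iic hν hxy hy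
  obtain ⟨F₂, hF₂, hF₂F₁⟩ := hμ.exists_glue_eqOn_Ici hF₁ hx (hxy.trans hy)
  exact ⟨F₂, hF₂, fun t ht => (hF₂F₁ ht.1).trans (hF₁f ht.2)⟩

theorem IsC1LiftNear.exists_extend_Icc {ι : Type*} {W : ι → Set ℝ} (hWo : ∀ i, IsOpen (W i))
    (hW : ∀ i, ∃ μ, IsC1LiftOn ξ μ (W i)) {a b a' b' : ℝ} (hK : Icc a' b' ⊆ ⋃ i, W i)
    (hf : IsC1LiftNear ξ f (Icc a b)) (ha : a' ≤ a) (hab : a ≤ b) (hb : b ≤ b') :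
    ∃ F, IsC1LiftNear ξ F (Icc a' b') ∧ EqOn F f (Icc a b) := by
  obtain ⟨r, hr, hloc⟩ := exists_pos_forall_isC1LiftNear hWo hW hK
  set x : ℕ → ℝ := fun n => max a' (a - n * r)
  set y : ℕ → ℝ := fun n => min b' (b + n * r)
  have hx : ∀ n, a' ≤ x (n + 1) ∧ x (n + 1) ≤ x n ∧ x n - r ≤ x (n + 1) ∧ x n ≤ a := by
    intro n; simp only [x]; push_cast
    refine ⟨le_max_left _ _, max_le_max le_rfl (by nlinarith), ?_, max_le ha (by nlinarith)⟩
    rw [sub_le_iff_le_add]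
    exact max_le (by linarith [le_max_left a' (a - (n + 1) * r)])
      (by linarith [le_max_right a' (a - (n + 1) * r)])
  have hy : ∀ n, y (n + 1) ≤ b' ∧ y n ≤ y (n + 1) ∧ y (n + 1) ≤ y n + r ∧ b ≤ y n := by
    intro n; simp only [y]; push_cast
    refine ⟨min_le_left _ _, min_le_min le_rfl (by nlinarith), ?_, le_min hb (by nlinarith)⟩
    rw [← sub_le_iff_le_add]
    exact le_min (by linarith [min_le_left b' (b + (n + 1) * r)])
      (by linarith [min_le_right b' (b + (n + 1) * r)])
  have hstep : ∀ n, ∃ F, IsC1LiftNear ξ F (Icc (x n) (y n)) ∧ EqOn F f (Icc a b) := by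
    intro n
    induction n with
    | zero => exact ⟨f, by simpa [x, y, ha, hb] using hf, fun _ _ => rfl⟩
    | succ n ih =>
      obtain ⟨F, hF, hFf⟩ := ih
      obtain ⟨hx₁, hx₂, hx₃, hx₄⟩ := hx n
      obtain ⟨hy₁, hy₂, hy₃, hy₄⟩ := hy n
      obtain ⟨μ, hμ⟩ := hloc (x n) ⟨hx₁.trans hx₂, hx₄.trans (hab.trans hb)⟩
      obtain ⟨ν, hν⟩ := hloc (y n) ⟨ha.trans (hab.trans hy₄), hy₂.trans hy₁⟩
      obtain ⟨G, hG, hGF⟩ := hF.exists_glue_Icc (hμ.mono (Icc_subset_Icc hx₃ (by linarith)))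
        (hν.mono (Icc_subset_Icc (by linarith) hy₃)) hx₂ (hx₄.trans (hab.trans hy₄)) hy₂
      exact ⟨G, hG, fun t ht => (hGF ⟨hx₄.trans ht.1, ht.2.trans hy₄⟩).trans (hFf ht)⟩
  obtain ⟨n, hn⟩ := exists_nat_ge (max (a - a') (b' - b) / r)
  rw [div_le_iff₀ hr, max_le_iff] at hn
  obtain ⟨F, hF, hFf⟩ := hstep n
  have hxn : x n = a' := max_eq_left (by linarith)
  have hyn : y n = b' := min_eq_left (by linarith)
  exact ⟨F, hxn ▸ hyn ▸ hF, hFf⟩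

end Lifts

theorem stmt12_general {V : Type*} [NormedAddCommGroup V] [NormedSpace ℝ V] [FiniteDimensional ℝ V]
    {Γ : Type*} [Group Γ] [Finite Γ] [DistribMulAction Γ V] [SMulCommClass Γ ℝ V]
    (I : Set ℝ) (hIconn : I.OrdConnected)
    {J : Type*} (Ij : J → Set ℝ)
    (hIjopen : ∀ j, IsOpen (Ij j))
    (hcover : ⋃ j, Ij j = I)
    (ξ : ℝ → Quotient (MulAction.orbitRel Γ V))
    (hloc : ∀ j, ∃ lam : ℝ → V, ContDiffOn ℝ 1 lam (Ij j) ∧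
      ∀ s ∈ Ij j, Quotient.mk (MulAction.orbitRel Γ V) (lam s) = ξ s) :
    ∃ lam : ℝ → V, ContDiffOn ℝ 1 lam I ∧
      ∀ s ∈ I, Quotient.mk (MulAction.orbitRel Γ V) (lam s) = ξ s := by
  have : SMulCommClass ℝ Γ V := .symm _ _ _
  have : ContinuousConstSMul Γ V :=
    ⟨fun γ => (DistribSMul.toLinearMap ℝ V γ).continuous_of_finiteDimensional⟩
  rcases I.eq_empty_or_nonempty with rfl | hI
  · exact ⟨0, contDiffOn_empty, fun _ h => h.elim⟩
  subst hcover
  obtain ⟨a, b, ha, hb, hab, hK, hexh⟩ :=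
    hIconn.exists_Icc_exhaustion (isOpen_iUnion hIjopen) hI
  have h₀ : ∃ f, IsC1LiftNear ξ f (Icc (a 0) (b 0)) := by
    obtain ⟨j, hj⟩ := mem_iUnion.1 (hK 0 ⟨le_rfl, hab 0⟩)
    obtain ⟨μ, hμ⟩ := hloc j
    obtain ⟨f, hf, -⟩ := IsC1LiftNear.exists_extend_Icc hIjopen hloc (hK 0)
      ⟨Ij j, hIjopen j, by simpa using hj, hμ⟩ le_rfl le_rfl (hab 0)
    exact ⟨f, hf⟩
  obtain ⟨lam, hlam⟩ := exists_isC1LiftOn_of_exhaustion ha hb h₀ fun n f hf =>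
    hf.exists_extend_Icc hIjopen hloc (hK (n + 1)) (ha n.le_succ) (hab n) (hb n.le_succ)
  exact ⟨lam, hlam.mono hexh⟩

/-- Let `Γ` be a finite group acting linearly on a finite-dimensional real normed vector space
`V`, and `π : V → V/Γ` the projection onto the orbit space. Let `I` be an open interval
covered by a family of open intervals `I_j`. If `ξ : ℝ → V/Γ` admits on each `I_j` a lift
which is `C¹` there, then `ξ` admits a lift which is `C¹` on all of `I`. -/
theorem stmt12 {V : Type*} [NormedAddCommGroup V] [NormedSpace ℝ V] [FiniteDimensional ℝ V]
    {Γ : Type*} [Group Γ] [Finite Γ] [DistribMulAction Γ V] [SMulCommClass Γ ℝ V]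
    (I : Set ℝ) (hIopen : IsOpen I) (hIconn : I.OrdConnected)
    {J : Type*} (Ij : J → Set ℝ)
    (hIjopen : ∀ j, IsOpen (Ij j)) (hIjconn : ∀ j, (Ij j).OrdConnected)
    (hcover : ⋃ j, Ij j = I)
    (ξ : ℝ → Quotient (MulAction.orbitRel Γ V))
    (hloc : ∀ j, ∃ lam : ℝ → V, ContDiffOn ℝ 1 lam (Ij j) ∧
      ∀ s ∈ Ij j, Quotient.mk (MulAction.orbitRel Γ V) (lam s) = ξ s) :
    ∃ lam : ℝ → V, ContDiffOn ℝ 1 lam I ∧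
      ∀ s ∈ I, Quotient.mk (MulAction.orbitRel Γ V) (lam s) = ξ s :=
  stmt12_general I hIconn Ij hIjopen hcover ξ hloc
end

section
/- Let I be an open interval and ξ : ℝ → V/Γ a function that is continuous on I. Then there exists λ : ℝ → V continuous on I with π(λ(t)) = ξ(t) for all t ∈ I. -/
/-!
The lift is built by induction on `|Γ|`, simultaneously for all open sets of times. Times at
which `ξ` is the orbit of a fixed point form a relatively closed set, and there any choice of
representatives is continuous: near a fixed point `z`, a point whose orbit is close to `Γ z` is
itself close to `z`. Near any other time `t`, write `ξ t = Γ x`; the stabilizer `H` of `x` is a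
proper subgroup, and a neighbourhood `B` of `x` with `g • B ∩ B ≠ ∅ → g ∈ H` makes `X/H → X/Γ` a
homeomorphism from `B/H` onto an open set, so near `t` the curve `ξ` comes from a continuous curve
in `X/H`, which lifts by induction.

Local lifts on an open subset of `ℝ` glue to a global one: two lifts that agree up to some `g` at
a time `c` can be joined at `c` after translating one of them by `g`. This gives lifts on compact
intervals, then on open intervals along an exhaustion by compact ones, and on each connected
component.
-/

open MulAction Set Topology Filter

theorem IsOpen.exists_Icc_exhaustion {J : Set ℝ} (hJo : IsOpen J) (hJc : J.OrdConnected)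
    {t₀ : ℝ} (ht₀ : t₀ ∈ J) :
    ∃ a b : ℕ → ℝ, Antitone a ∧ Monotone b ∧ (∀ n, a n ∈ J ∧ b n ∈ J ∧ a n ≤ b n) ∧
      ∀ t ∈ J, ∃ n, t ∈ Ioo (a n) (b n) := by
  -- the order topology on `J` makes `atTop` and `atBot` on `J` countably generated
  have := hJc
  have : Nonempty J := ⟨⟨t₀, ht₀⟩⟩
  obtain ⟨u, hu, hu_top⟩ := exists_seq_monotone_tendsto_atTop_atTop J
  obtain ⟨v, hv, hv_bot⟩ := exists_seq_antitone_tendsto_atTop_atBot J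
  refine ⟨fun n => min (v n) t₀, fun n => max (u n) t₀, fun m n h => min_le_min_right _ (hv h),
    fun m n h => max_le_max_right _ (hu h), fun n => ⟨?_, ?_, min_le_right _ _ |>.trans
      (le_max_right _ _)⟩, fun t ht => ?_⟩
  · show min (v n : ℝ) t₀ ∈ J
    rcases min_choice (v n : ℝ) t₀ with h | h <;> rw [h]
    exacts [(v n).2, ht₀]
  · show max (u n : ℝ) t₀ ∈ J
    rcases max_choice (u n : ℝ) t₀ with h | h <;> rw [h]
    exacts [(u n).2, ht₀]
  obtain ⟨p, q, ⟨hpt, htq⟩, hpq⟩ := mem_nhds_iff_exists_Ioo_subset.1 (hJo.mem_nhds ht)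
  obtain ⟨p', hpp', hp't⟩ := exists_between hpt
  obtain ⟨q', htq', hq'q⟩ := exists_between htq
  obtain ⟨n₁, hn₁⟩ := (tendsto_atTop.1 hu_top ⟨q', hpq ⟨hpt.trans htq', hq'q⟩⟩).exists
  obtain ⟨n₂, hn₂⟩ := (tendsto_atBot.1 hv_bot ⟨p', hpq ⟨hpp', hp't.trans htq⟩⟩).exists
  have hn₁' : q' ≤ u (max n₁ n₂) := hn₁.trans (hu (le_max_left n₁ n₂))
  have hn₂' : v (max n₁ n₂) ≤ p' := (hv (le_max_right n₁ n₂)).trans hn₂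
  exact ⟨max n₁ n₂, (min_le_left _ _).trans_lt (hn₂'.trans_lt hp't),
    htq'.trans_le (hn₁'.trans (le_max_left _ _))⟩

theorem Set.eqOn_piecewise_Iic_Ici {α β : Type*} [LinearOrder α] {f g : α → β} {c : α}
    (hc : f c = g c) : EqOn ((Iic c).piecewise f g) g (Ici c) := by
  intro t ht
  rcases eq_or_lt_of_le ht with rfl | h
  · rw [piecewise_eq_of_mem _ _ _ (mem_Iic.2 le_rfl), hc]
  · exact piecewise_eq_of_notMem _ _ _ (not_le.2 h)

section OrbitSpace

variable {Γ X : Type*} [Group Γ] [MulAction Γ X]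

theorem orbitRel_mk_eq_mk_iff {x y : X} :
    Quotient.mk (orbitRel Γ X) x = Quotient.mk _ y ↔ ∃ g : Γ, g • y = x :=
  Quotient.eq.trans mem_orbit_iff

theorem mk_mem_image_fixedPoints_iff {y : X} :
    Quotient.mk (orbitRel Γ X) y ∈ Quotient.mk (orbitRel Γ X) '' fixedPoints Γ X ↔
      y ∈ fixedPoints Γ X := by
  refine ⟨?_, mem_image_of_mem _⟩
  rintro ⟨z, hz, hzy⟩
  obtain ⟨g, rfl⟩ := orbitRel_mk_eq_mk_iff.1 hzy.symm
  rwa [hz g]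

theorem card_stabilizer_lt [Finite Γ] {x : X} (hx : x ∉ fixedPoints Γ X) :
    Nat.card (stabilizer Γ x) < Nat.card Γ :=
  (Subgroup.card_le_card_group _).lt_of_ne fun h => hx fun g =>
    ((Subgroup.card_eq_iff_eq_top _).1 h ▸ Subgroup.mem_top g : g ∈ stabilizer Γ x)

def orbitQuotientMap (H : Subgroup Γ) : Quotient (orbitRel H X) → Quotient (orbitRel Γ X) :=
  Quotient.lift (Quotient.mk _) fun _ _ h => Quotient.sound (orbitRel_subgroup_le H h)

variable [TopologicalSpace X]

def IsLiftOn (ξ : ℝ → Quotient (orbitRel Γ X)) (l : ℝ → X) (s : Set ℝ) : Prop :=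
  ContinuousOn l s ∧ ∀ t ∈ s, Quotient.mk _ (l t) = ξ t

variable {ξ : ℝ → Quotient (orbitRel Γ X)} {l l₁ l₂ : ℝ → X} {s s₁ s₂ : Set ℝ} {c : ℝ}

theorem isLiftOn_empty : IsLiftOn ξ l ∅ :=
  ⟨continuousOn_empty _, fun _ h => h.elim⟩

theorem IsLiftOn.mono (h : IsLiftOn ξ l s) (hs : s₂ ⊆ s) : IsLiftOn ξ l s₂ :=
  ⟨h.1.mono hs, fun t ht => h.2 t (hs ht)⟩

theorem IsLiftOn.exists_smul_eq (h₁ : IsLiftOn ξ l₁ s₁) (h₂ : IsLiftOn ξ l₂ s₂) (hc₁ : c ∈ s₁)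
    (hc₂ : c ∈ s₂) : ∃ g : Γ, g • l₂ c = l₁ c :=
  orbitRel_mk_eq_mk_iff.1 ((h₁.2 c hc₁).trans (h₂.2 c hc₂).symm)

theorem IsLiftOn.piecewise_Iic (h₁ : IsLiftOn ξ l₁ s₁) (h₂ : IsLiftOn ξ l₂ s₂) (hs₁ : s₁ ⊆ Iic c)
    (hs₂ : s₂ ⊆ Ici c) (hc₁ : c ∈ s₁) (hc₂ : c ∈ s₂) (hc : l₁ c = l₂ c) :
    IsLiftOn ξ ((Iic c).piecewise l₁ l₂) (s₁ ∪ s₂) := by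
  have hleft : (s₁ ∪ s₂) ∩ Iic c ⊆ s₁ := by
    rintro t ⟨ht | ht, htc⟩
    · exact ht
    · rwa [le_antisymm (mem_Iic.1 htc) (mem_Ici.1 (hs₂ ht))]
  have hright : (s₁ ∪ s₂) ∩ Ici c ⊆ s₂ := by
    rintro t ⟨ht | ht, htc⟩
    · rwa [le_antisymm (mem_Iic.1 (hs₁ ht)) (mem_Ici.1 htc)]
    · exact ht
  refine ⟨ContinuousOn.piecewise ?_ ?_ ?_, ?_⟩
  · rintro t ⟨-, ht⟩
    rw [frontier_Iic, mem_singleton_iff] at ht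
    rwa [ht]
  · rw [closure_Iic]
    exact h₁.1.mono hleft
  · rw [compl_Iic, closure_Ioi]
    exact h₂.1.mono hright
  · rintro t (ht | ht)
    · rw [piecewise_eq_of_mem _ _ _ (hs₁ ht)]
      exact h₁.2 t ht
    · rw [eqOn_piecewise_Iic_Ici hc (hs₂ ht)]
      exact h₂.2 t ht

theorem exists_isLiftOn_of_compatible {ι : Type*} [Nonempty ι] {K : ι → Set ℝ} {L : ι → ℝ → X}
    (hL : ∀ i, IsLiftOn ξ (L i) (K i)) (hLK : ∀ i j, EqOn (L i) (L j) (K i ∩ K j))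
    (hcover : ∀ t ∈ s, ∃ i, K i ∈ 𝓝 t) : ∃ l, IsLiftOn ξ l s := by
  choose! i hi using hcover
  refine ⟨fun t => L (i t) t, fun t ht => ?_,
    fun t ht => (hL (i t)).2 t (mem_of_mem_nhds (hi t ht))⟩
  have heq : (fun r => L (i r) r) =ᶠ[𝓝[s] t] L (i t) := by
    filter_upwards [self_mem_nhdsWithin, nhdsWithin_le_nhds (hi t ht)] with r hr hrK
    exact hLK _ _ ⟨mem_of_mem_nhds (hi r hr), hrK⟩
  exact ((hL (i t)).1.continuousAt (hi t ht)).continuousWithinAt.congr_of_eventuallyEq heq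
    (heq.eq_of_nhdsWithin ht)

variable [ContinuousConstSMul Γ X]

instance Subgroup.continuousConstSMul (H : Subgroup Γ) : ContinuousConstSMul H X :=
  ⟨fun h => continuous_const_smul (h : Γ)⟩

theorem IsLiftOn.smul (h : IsLiftOn ξ l s) (g : Γ) : IsLiftOn ξ (g • l) s :=
  ⟨(continuous_const_smul g).comp_continuousOn h.1,
    fun t ht => (orbitRel_mk_eq_mk_iff.2 ⟨g, rfl⟩).trans (h.2 t ht)⟩

theorem IsLiftOn.exists_extend_Icc {l' : ℝ → X} {a b a' b' : ℝ} (hl : IsLiftOn ξ l (Icc a b))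
    (hl' : IsLiftOn ξ l' (Icc a' b')) (ha : a' ≤ a) (hab : a ≤ b) (hb : b ≤ b') :
    ∃ L, IsLiftOn ξ L (Icc a' b') ∧ EqOn L l (Icc a b) := by
  obtain ⟨g₁, hg₁⟩ := hl.exists_smul_eq hl' (left_mem_Icc.2 hab) ⟨ha, hab.trans hb⟩
  obtain ⟨g₂, hg₂⟩ := hl.exists_smul_eq hl' (right_mem_Icc.2 hab) ⟨ha.trans hab, hb⟩
  have hright : IsLiftOn ξ ((Iic b).piecewise l (g₂ • l')) (Icc a b') := by
    rw [← Icc_union_Icc_eq_Icc hab hb]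
    exact hl.piecewise_Iic ((hl'.smul g₂).mono (Icc_subset_Icc_left (ha.trans hab)))
      Icc_subset_Iic_self Icc_subset_Ici_self (right_mem_Icc.2 hab) (left_mem_Icc.2 hb) hg₂.symm
  have hjoin : (g₁ • l') a = (Iic b).piecewise l (g₂ • l') a :=
    hg₁.trans (piecewise_eq_of_mem _ _ _ (mem_Iic.2 hab)).symm
  refine ⟨(Iic a).piecewise (g₁ • l') ((Iic b).piecewise l (g₂ • l')), ?_, fun t ht => ?_⟩
  · rw [← Icc_union_Icc_eq_Icc ha (hab.trans hb)]
    exact ((hl'.smul g₁).mono (Icc_subset_Icc_right (hab.trans hb))).piecewise_Iic hright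
      Icc_subset_Iic_self Icc_subset_Ici_self (right_mem_Icc.2 ha)
      (left_mem_Icc.2 (hab.trans hb)) hjoin
  · rw [eqOn_piecewise_Iic_Ici hjoin ht.1, piecewise_eq_of_mem _ _ _ (mem_Iic.2 ht.2)]

theorem exists_isLiftOn_Icc {J : Set ℝ} (hJ : IsPreconnected J)
    (hloc : ∀ t ∈ J, ∃ u ∈ 𝓝 t, ∃ l, IsLiftOn ξ l u) {a b : ℝ} (ha : a ∈ J) (hb : b ∈ J) :
    ∃ l, IsLiftOn ξ l (Icc a b) := by
  refine hJ.induction₂' (fun x y => ∃ l, IsLiftOn ξ l (Icc x y)) (fun x hx => ?_)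
    (fun x y z _ _ _ hxy hyz => ?_) ha hb
  · obtain ⟨u, hu, l, hl⟩ := hloc x hx
    obtain ⟨p, q, hxpq, hpq⟩ := mem_nhds_iff_exists_Ioo_subset.1 hu
    filter_upwards [nhdsWithin_le_nhds (Ioo_mem_nhds hxpq.1 hxpq.2)] with y hy
    exact ⟨⟨l, hl.mono ((ordConnected_Ioo.out hxpq hy).trans hpq)⟩,
      ⟨l, hl.mono ((ordConnected_Ioo.out hy hxpq).trans hpq)⟩⟩
  obtain ⟨l₁, hl₁⟩ := hxy
  obtain ⟨l₂, hl₂⟩ := hyz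
  rcases lt_or_ge y x with hyx | hxy
  · exact ⟨l₂, hl₂.mono (Icc_subset_Icc_left hyx.le)⟩
  rcases lt_or_ge z y with hzy | hyz
  · exact ⟨l₁, hl₁.mono (Icc_subset_Icc_right hzy.le)⟩
  obtain ⟨g, hg⟩ := hl₁.exists_smul_eq hl₂ (right_mem_Icc.2 hxy) (left_mem_Icc.2 hyz)
  rw [← Icc_union_Icc_eq_Icc hxy hyz]
  exact ⟨_, hl₁.piecewise_Iic (hl₂.smul g) Icc_subset_Iic_self Icc_subset_Ici_self
    (right_mem_Icc.2 hxy) (left_mem_Icc.2 hyz) hg.symm⟩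

theorem exists_isLiftOn_of_ordConnected {J : Set ℝ} (hJo : IsOpen J) (hJc : J.OrdConnected)
    (hloc : ∀ t ∈ J, ∃ u ∈ 𝓝 t, ∃ l, IsLiftOn ξ l u) : ∃ l, IsLiftOn ξ l J := by
  rcases J.eq_empty_or_nonempty with rfl | ⟨t₀, ht₀⟩
  · exact ⟨fun t => (ξ t).out, isLiftOn_empty⟩
  obtain ⟨a, b, ha, hb, habJ, hcover⟩ := hJo.exists_Icc_exhaustion hJc ht₀
  choose l hl using fun n => exists_isLiftOn_Icc hJc.isPreconnected hloc (habJ n).1 (habJ n).2.1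
  have hextend : ∀ n (L : ℝ → X), IsLiftOn ξ L (Icc (a n) (b n)) →
      ∃ L', IsLiftOn ξ L' (Icc (a (n + 1)) (b (n + 1))) ∧ EqOn L' L (Icc (a n) (b n)) :=
    fun n L hL => hL.exists_extend_Icc (hl (n + 1)) (ha n.le_succ) (habJ n).2.2 (hb n.le_succ)
  choose! extend hextend_lift hextend_eq using hextend
  let L : ℕ → ℝ → X := fun n => Nat.rec (motive := fun _ => ℝ → X) (l 0) extend n
  have hL : ∀ n, IsLiftOn ξ (L n) (Icc (a n) (b n)) := by
    intro n
    induction n with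
    | zero => exact hl 0
    | succ n ih => exact hextend_lift n _ ih
  have hL_mono : ∀ m n, m ≤ n → EqOn (L n) (L m) (Icc (a m) (b m)) := by
    intro m n hmn
    induction n, hmn using Nat.le_induction with
    | base => exact eqOn_refl _ _
    | succ n hmn ih =>
      exact fun t ht => (hextend_eq n _ (hL n) (Icc_subset_Icc (ha hmn) (hb hmn) ht)).trans (ih ht)
  refine exists_isLiftOn_of_compatible hL (fun m n => ?_) fun t ht => ?_
  · rcases le_total m n with h | h
    · exact fun t ht => (hL_mono m n h ht.1).symm
    · exact fun t ht => hL_mono n m h ht.2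
  · obtain ⟨n, hn⟩ := hcover t ht
    exact ⟨n, Icc_mem_nhds hn.1 hn.2⟩

theorem exists_isLiftOn_of_isOpen {U : Set ℝ} (hU : IsOpen U)
    (hloc : ∀ t ∈ U, ∃ u ∈ 𝓝 t, ∃ l, IsLiftOn ξ l u) : ∃ l, IsLiftOn ξ l U := by
  have hcomp : ∀ C : Set ℝ, ∃ l, ∀ t, connectedComponentIn U t = C → IsLiftOn ξ l C := by
    intro C
    by_cases hC : ∃ t ∈ U, connectedComponentIn U t = C
    · obtain ⟨t, -, rfl⟩ := hC
      obtain ⟨l, hl⟩ := exists_isLiftOn_of_ordConnected hU.connectedComponentIn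
        isPreconnected_connectedComponentIn.ordConnected
        fun s hs => hloc s (connectedComponentIn_subset U t hs)
      exact ⟨l, fun _ _ => hl⟩
    · refine ⟨fun t => (ξ t).out, fun t ht => ?_⟩
      rw [← ht, connectedComponentIn_eq_empty fun htU => hC ⟨t, htU, ht⟩]
      exact isLiftOn_empty
  choose L hL using hcomp
  refine exists_isLiftOn_of_compatible (K := connectedComponentIn U)
    (L := fun t => L (connectedComponentIn U t)) (fun t => hL _ t rfl) (fun s t r hr => ?_)
    fun t ht => ⟨t, hU.connectedComponentIn.mem_nhds (mem_connectedComponentIn ht)⟩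
  simp only [connectedComponentIn_eq hr.1, connectedComponentIn_eq hr.2]

theorem isOpenMap_orbitQuotientMap (H : Subgroup Γ) : IsOpenMap (orbitQuotientMap (X := X) H) := by
  intro W hW
  rw [← image_preimage_eq W Quotient.mk_surjective, image_image]
  exact isOpenQuotientMap_quotientMk.isOpenMap _ (hW.preimage continuous_quot_mk)

theorem isClosed_image_mk_fixedPoints [T2Space X] :
    IsClosed (Quotient.mk (orbitRel Γ X) '' fixedPoints Γ X) := by
  rw [← isOpenQuotientMap_quotientMk.isQuotientMap.isClosed_preimage]
  have hpre : Quotient.mk (orbitRel Γ X) ⁻¹' (Quotient.mk _ '' fixedPoints Γ X) =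
      ⋂ g : Γ, {x | g • x = x} := by
    ext
    rw [mem_preimage, mk_mem_image_fixedPoints_iff, mem_iInter]
    rfl
  rw [hpre]
  exact isClosed_iInter fun g => isClosed_eq (continuous_const_smul g) continuous_id

theorem comap_mk_nhds_le_of_mem_fixedPoints [Finite Γ] {z : X} (hz : z ∈ fixedPoints Γ X) :
    comap (Quotient.mk (orbitRel Γ X)) (𝓝 (Quotient.mk _ z)) ≤ 𝓝 z := by
  intro N hN
  have hW : {w : X | ∀ g : Γ, g • w ∈ N} ∈ 𝓝 z :=
    eventually_all.2 fun g => (continuous_const_smul g).tendsto' z z (hz g) hN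
  refine mem_comap.2 ⟨_, isOpenQuotientMap_quotientMk.isOpenMap.image_mem_nhds hW, ?_⟩
  rintro y ⟨w, hw, hwy⟩
  obtain ⟨g, rfl⟩ := orbitRel_mk_eq_mk_iff.1 hwy.symm
  exact hw g

theorem ContinuousWithinAt.of_mk_of_mem_fixedPoints [Finite Γ] {α : Type*} [TopologicalSpace α]
    {f : α → Quotient (orbitRel Γ X)} {l : α → X} {s : Set α} {t : α}
    (hf : ContinuousWithinAt f s t) (hl : ∀ r ∈ s, Quotient.mk _ (l r) = f r) (ht : t ∈ s)
    (hfix : l t ∈ fixedPoints Γ X) : ContinuousWithinAt l s t := by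
  have : Tendsto (Quotient.mk _ ∘ l) (𝓝[s] t) (𝓝 (Quotient.mk (orbitRel Γ X) (l t))) := by
    rw [hl t ht]
    exact hf.congr' (eventually_nhdsWithin_of_forall fun r hr => (hl r hr).symm)
  exact (tendsto_comap_iff.2 this).mono_right (comap_mk_nhds_le_of_mem_fixedPoints hfix)

theorem exists_isOpen_smul_mem_stabilizer [Finite Γ] [T2Space X] (x : X) :
    ∃ B, IsOpen B ∧ x ∈ B ∧ ∀ g : Γ, ∀ y ∈ B, g • y ∈ B → g ∈ stabilizer Γ x := by
  have hsep : ∀ g : Γ, ∃ N ∈ 𝓝 x, g ∉ stabilizer Γ x → ∀ y ∈ N, g • y ∉ N := by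
    intro g
    by_cases hg : g ∈ stabilizer Γ x
    · exact ⟨univ, univ_mem, fun h => (h hg).elim⟩
    obtain ⟨u, v, hu, hv, huv⟩ := t2_separation_nhds (Ne.symm hg)
    exact ⟨u ∩ (g • ·) ⁻¹' v, inter_mem hu ((continuous_const_smul g).continuousAt hv),
      fun _ y hy hgy => huv.ne_of_mem hgy.1 hy.2 rfl⟩
  choose N hN hNsep using hsep
  obtain ⟨B, hBN, hBo, hxB⟩ := mem_nhds_iff.1 (iInter_mem.2 hN)
  exact ⟨B, hBo, hxB, fun g y hy hgy => by_contra fun hg =>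
    hNsep g hg y (iInter_subset _ g (hBN hy)) (iInter_subset _ g (hBN hgy))⟩

theorem exists_continuousOn_section_orbitQuotientMap [Finite Γ] [T2Space X] (x : X) :
    ∃ W, IsOpen W ∧ Quotient.mk (orbitRel Γ X) x ∈ W ∧
      ∃ σ : Quotient (orbitRel Γ X) → Quotient (orbitRel (stabilizer Γ x) X),
        ContinuousOn σ W ∧ ∀ z ∈ W, orbitQuotientMap _ (σ z) = z := by
  obtain ⟨B, hBo, hxB, hB⟩ := exists_isOpen_smul_mem_stabilizer (Γ := Γ) x
  set H := stabilizer Γ x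
  set S := Quotient.mk (orbitRel H X) '' B
  have hinj : InjOn (orbitQuotientMap H) S := by
    rintro _ ⟨y, hy, rfl⟩ _ ⟨y', hy', rfl⟩ h
    obtain ⟨g, hg⟩ := orbitRel_mk_eq_mk_iff.1 h
    exact Quotient.sound ⟨⟨g, hB g y' hy' (hg.symm ▸ hy)⟩, hg⟩
  have himage : orbitQuotientMap H '' S = Quotient.mk (orbitRel Γ X) '' B := image_image _ _ _
  have : Nonempty (Quotient (orbitRel H X)) := ⟨Quotient.mk _ x⟩
  refine ⟨_, isOpenQuotientMap_quotientMk.isOpenMap _ hBo, mem_image_of_mem _ hxB,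
    Function.invFunOn (orbitQuotientMap H) S, ?_, ?_⟩
  · rw [← himage]
    exact ((isOpenMap_orbitQuotientMap H).domRestrict
      (isOpenQuotientMap_quotientMk.isOpenMap _ hBo)).continuousOn_image_of_leftInvOn
      hinj.leftInvOn_invFunOn
  · rw [← himage]
    exact (surjOn_image _ _).rightInvOn_invFunOn

theorem exists_isLiftOn_nhds_of_stabilizer [Finite Γ] [T2Space X] {U : Set ℝ} (hU : IsOpen U)
    (hξ : ContinuousOn ξ U) {t : ℝ} (ht : t ∈ U) {x : X} (hx : Quotient.mk _ x = ξ t)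
    (hlift : ∀ O : Set ℝ, IsOpen O → ∀ ζ : ℝ → Quotient (orbitRel (stabilizer Γ x) X),
      ContinuousOn ζ O → ∃ l, IsLiftOn ζ l O) :
    ∃ u ∈ 𝓝 t, ∃ l, IsLiftOn ξ l u := by
  obtain ⟨W, hWo, hxW, σ, hσ, hσW⟩ := exists_continuousOn_section_orbitQuotientMap (Γ := Γ) x
  have hO : IsOpen (U ∩ ξ ⁻¹' W) := hξ.isOpen_inter_preimage hU hWo
  obtain ⟨l, hl, hlσ⟩ := hlift _ hO (σ ∘ ξ) (hσ.comp (hξ.mono inter_subset_left) fun s hs => hs.2)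
  refine ⟨_, hO.mem_nhds ⟨ht, by rwa [mem_preimage, ← hx]⟩, l, hl, fun s hs => ?_⟩
  calc Quotient.mk _ (l s) = orbitQuotientMap _ (Quotient.mk _ (l s)) := rfl
    _ = orbitQuotientMap _ (σ (ξ s)) := congrArg _ (hlσ s hs)
    _ = ξ s := hσW _ hs.2

theorem exists_isLiftOn_of_isLiftOn_inter_compl [Finite Γ] [T2Space X] {U : Set ℝ}
    (hU : IsOpen U) (hξ : ContinuousOn ξ U)
    (hl : IsLiftOn ξ l (U ∩ ξ ⁻¹' (Quotient.mk (orbitRel Γ X) '' fixedPoints Γ X)ᶜ)) :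
    ∃ l, IsLiftOn ξ l U := by
  classical
  set F := ξ ⁻¹' (Quotient.mk (orbitRel Γ X) '' fixedPoints Γ X)
  have hlift : ∀ t ∈ U, Quotient.mk _ (F.piecewise (fun t => (ξ t).out) l t) = ξ t := by
    intro t ht
    by_cases htF : t ∈ F
    · rw [piecewise_eq_of_mem _ _ _ htF]
      exact Quotient.out_eq _
    · rw [piecewise_eq_of_notMem _ _ _ htF]
      exact hl.2 t ⟨ht, htF⟩
  refine ⟨F.piecewise (fun t => (ξ t).out) l, fun t ht => ?_, hlift⟩
  by_cases htF : t ∈ F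
  · refine (hξ t ht).of_mk_of_mem_fixedPoints hlift ht ?_
    rw [piecewise_eq_of_mem _ _ _ htF, ← mk_mem_image_fixedPoints_iff, Quotient.out_eq]
    exact htF
  · have hU' : U ∩ Fᶜ ∈ 𝓝 t :=
      (hξ.isOpen_inter_preimage hU isClosed_image_mk_fixedPoints.isOpen_compl).mem_nhds ⟨ht, htF⟩
    refine ((hl.1.continuousAt hU').congr ?_).continuousWithinAt
    filter_upwards [hU'] with s hs
    exact (piecewise_eq_of_notMem _ _ _ hs.2).symm

theorem exists_isLiftOn [Finite Γ] [T2Space X] {U : Set ℝ} (hU : IsOpen U)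
    {ξ : ℝ → Quotient (orbitRel Γ X)} (hξ : ContinuousOn ξ U) : ∃ l, IsLiftOn ξ l U := by
  induction hn : Nat.card Γ using Nat.strong_induction_on generalizing Γ U ξ with
  | _ n ih =>
    set U' := U ∩ ξ ⁻¹' (Quotient.mk (orbitRel Γ X) '' fixedPoints Γ X)ᶜ
    have hU' : IsOpen U' :=
      hξ.isOpen_inter_preimage hU isClosed_image_mk_fixedPoints.isOpen_compl
    obtain ⟨l, hl⟩ := exists_isLiftOn_of_isOpen hU' fun t ht =>
      have hfix : (ξ t).out ∉ fixedPoints Γ X := by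
        rw [← mk_mem_image_fixedPoints_iff, Quotient.out_eq]
        exact ht.2
      exists_isLiftOn_nhds_of_stabilizer hU hξ ht.1 (Quotient.out_eq _) fun _ hO _ hζ =>
        ih _ (hn ▸ card_stabilizer_lt hfix) hO hζ rfl
    exact exists_isLiftOn_of_isLiftOn_inter_compl hU hξ hl

end OrbitSpace

theorem stmt13_general {V : Type*} [NormedAddCommGroup V] [NormedSpace ℝ V] [FiniteDimensional ℝ V]
    {Γ : Type*} [Group Γ] [Finite Γ] [DistribMulAction Γ V] [SMulCommClass Γ ℝ V]
    (I : Set ℝ) (hIopen : IsOpen I)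
    (ξ : ℝ → Quotient (MulAction.orbitRel Γ V))
    (hξ : ContinuousOn ξ I) :
    ∃ lam : ℝ → V, ContinuousOn lam I ∧
      ∀ t ∈ I, Quotient.mk (MulAction.orbitRel Γ V) (lam t) = ξ t := by
  have : ContinuousConstSMul Γ V :=
    ⟨fun g => (DistribSMul.toLinearMap ℝ V g).continuous_of_finiteDimensional⟩
  exact exists_isLiftOn hIopen hξ

/-- Let `Γ` be a finite group acting linearly on a finite-dimensional real normed vector space
`V`, and `π : V → V/Γ` the projection onto the orbit space (with its quotient topology). If
`ξ : ℝ → V/Γ` is continuous on an open interval `I`, then there exists `λ : ℝ → V` continuous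
on `I` with `π (λ t) = ξ t` for all `t ∈ I`. -/
theorem stmt13 {V : Type*} [NormedAddCommGroup V] [NormedSpace ℝ V] [FiniteDimensional ℝ V]
    {Γ : Type*} [Group Γ] [Finite Γ] [DistribMulAction Γ V] [SMulCommClass Γ ℝ V]
    (I : Set ℝ) (hIopen : IsOpen I) (hIconn : I.OrdConnected)
    (ξ : ℝ → Quotient (MulAction.orbitRel Γ V))
    (hξ : ContinuousOn ξ I) :
    ∃ lam : ℝ → V, ContinuousOn lam I ∧
      ∀ t ∈ I, Quotient.mk (MulAction.orbitRel Γ V) (lam t) = ξ t :=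
  stmt13_general I hIopen ξ hξ
end

section
/- Let Γ act on V × V diagonally by g·(x, v) = (g·x, g·v), and let Dπ : V × V → (V × V)/Γ be the canonical projection onto the orbit space with the quotient topology. Let I be an open interval and λ : ℝ → V a function differentiable at every point of I. If the map t ↦ Dπ(λ(t), λ′(t)) is continuous on I, then the derivative λ′ is continuous on I; that is, λ is continuously differentiable on I. -/
/-!
Fix `t₀ ∈ I`. Since `Γ` is finite and acts by homeomorphisms, continuity of the orbit map at `t₀`
forces `λ' t` to stay, for `t` near `t₀`, close to the finite set `S` of second coordinates of the
orbit of `(λ t₀, λ' t₀)`. Choose a continuous functional `φ` taking the value `φ (λ' t₀)` at no other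
point of `S`. By Darboux's theorem `φ ∘ λ'` maps small intervals around `t₀` to intervals, so it
cannot jump from near `φ (λ' t₀)` to near another value of `φ` on `S`; hence `λ' t` is close to
`λ' t₀` itself.
-/

open Filter Set Topology

theorem SeparatingDual.exists_forall_apply_ne {R V : Type*} [Field R] [Infinite R]
    [TopologicalSpace R] [IsTopologicalRing R] [AddCommGroup V] [TopologicalSpace V] [Module R V]
    [SeparatingDual R V] {s : Set V} (hs : s.Finite) {x : V} (hx : x ∉ s) :
    ∃ φ : StrongDual R V, ∀ y ∈ s, φ y ≠ φ x := by
  have : Finite s := hs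
  let p : s → Subspace R (StrongDual R V) := fun y =>
    LinearMap.ker (LinearMap.applyₗ (R := R) (M := V) (M₂ := R) ((y : V) - x) ∘ₗ
      ContinuousLinearMap.coeLM R)
  have hp : ∀ y, p y ≠ ⊤ := fun ⟨y, hy⟩ htop => by
    obtain ⟨φ, hφ⟩ := exists_separating_of_ne (R := R) (ne_of_mem_of_not_mem hy hx)
    have : φ ∈ p ⟨y, hy⟩ := htop ▸ Submodule.mem_top
    exact hφ (by simpa [p, sub_eq_zero] using this)
  obtain ⟨φ, hφ⟩ : ∃ φ, φ ∉ ⋃ y, (p y : Set (StrongDual R V)) := by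
    by_contra! h
    obtain ⟨y, hy⟩ := Subspace.exists_eq_top_of_iUnion_eq_univ (eq_univ_of_forall h)
    exact hp y hy
  refine ⟨φ, fun y hy hφy => hφ (mem_iUnion.2 ⟨⟨y, hy⟩, ?_⟩)⟩
  simp [p, hφy]

theorem MulAction.tendsto_nhdsSet_orbit_of_tendsto_quotient {Γ X α : Type*} [Group Γ] [Finite Γ]
    [MulAction Γ X] [TopologicalSpace X] [ContinuousConstSMul Γ X] {f : α → X} {l : Filter α}
    {x : X} (hf : Tendsto (fun a => Quotient.mk (orbitRel Γ X) (f a)) l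
      (𝓝 (Quotient.mk (orbitRel Γ X) x))) :
    Tendsto f l (𝓝ˢ (orbit Γ x)) := by
  refine fun O hO => mem_map.2 ?_
  obtain ⟨U, hU, hxU, hUO⟩ := mem_nhdsSet_iff_exists.1 hO
  -- the points whose whole orbit lies in `U`; open because `Γ` is finite
  let W := ⋂ g : Γ, (g • ·) ⁻¹' U
  have hW : IsOpen W := isOpen_iInter_of_finite fun g => hU.preimage (continuous_const_smul g)
  have hxW : x ∈ W := mem_iInter.2 fun g => hxU (mem_orbit x g)
  have hπW := (isOpenMap_quotient_mk'_mul (Γ := Γ) W hW).mem_nhds (mem_image_of_mem _ hxW)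
  filter_upwards [hf.eventually_mem hπW] with a ⟨w, hwW, hw⟩
  obtain ⟨g, hg⟩ : f a ∈ orbit Γ w := Quotient.exact hw.symm
  exact hUO (hg ▸ mem_iInter.1 hwW g)

theorem eventually_deriv_mem_of_mem_union {g : ℝ → ℝ} {a : ℝ} {U Z : Set ℝ} (hU : IsOpen U)
    (hZ : IsOpen Z) (hUZ : Disjoint U Z) (hg : ∀ᶠ t in 𝓝 a, DifferentiableAt ℝ g t)
    (ha : deriv g a ∈ U) (h : ∀ᶠ t in 𝓝 a, deriv g t ∈ U ∪ Z) :
    ∀ᶠ t in 𝓝 a, deriv g t ∈ U := by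
  obtain ⟨δ, hδ, hball⟩ := Metric.eventually_nhds_iff_ball.1 (hg.and h)
  -- by Darboux's theorem, `deriv g` maps the ball onto a connected set
  have hsub : deriv g '' Metric.ball a δ ⊆ U :=
    ((convex_ball a δ).image_deriv fun t ht => (hball t ht).1).isPreconnected
      |>.subset_left_of_subset_union hU hZ hUZ (image_subset_iff.2 fun t ht => (hball t ht).2)
      ⟨_, mem_image_of_mem _ (Metric.mem_ball_self hδ), ha⟩
  exact Filter.mem_of_superset (Metric.ball_mem_nhds a hδ) fun t ht => hsub (mem_image_of_mem _ ht)

theorem continuousAt_deriv_of_tendsto_nhdsSet_finite {E : Type*} [NormedAddCommGroup E]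
    [NormedSpace ℝ E] {f : ℝ → E} {a : ℝ} {S : Set E} (hf : ∀ᶠ t in 𝓝 a, DifferentiableAt ℝ f t)
    (hS : S.Finite) (h : Tendsto (deriv f) (𝓝 a) (𝓝ˢ S)) :
    ContinuousAt (deriv f) a := by
  set v₀ := deriv f a
  obtain ⟨φ, hφ⟩ := SeparatingDual.exists_forall_apply_ne (R := ℝ) hS.sdiff
    (notMem_sdiff_of_mem (mem_singleton v₀))
  obtain ⟨U, Z, hU, hZ, hv₀U, hSZ, hUZ⟩ := SeparatedNhds.of_finite (finite_singleton (φ v₀))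
    (hS.sdiff.image φ) (disjoint_singleton_left.2 fun ⟨w, hw, hφw⟩ => hφ w hw hφw)
  have hderiv : ∀ t, DifferentiableAt ℝ f t → deriv (φ ∘ f) t = φ (deriv f t) := fun t ht =>
    (φ.hasFDerivAt.comp_hasDerivAt t ht.hasDerivAt).deriv
  refine fun N hN => mem_map.2 ?_
  have hnhds : N ∩ φ ⁻¹' U ∪ φ ⁻¹' Z ∈ 𝓝ˢ S := by
    refine mem_nhdsSet_iff_forall.2 fun w hw => ?_
    by_cases hwv₀ : w = v₀
    · subst hwv₀
      exact mem_of_superset (inter_mem hN (φ.continuous.continuousAt.preimage_mem_nhds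
        (hU.mem_nhds (hv₀U rfl)))) subset_union_left
    · exact mem_of_superset (φ.continuous.continuousAt.preimage_mem_nhds
        (hZ.mem_nhds (hSZ (mem_image_of_mem φ ⟨hw, hwv₀⟩)))) subset_union_right
  have hφU : ∀ᶠ t in 𝓝 a, φ (deriv f t) ∈ U := by
    have hφf := eventually_deriv_mem_of_mem_union (g := φ ∘ f) hU hZ hUZ
      (hf.mono fun t ht => φ.differentiableAt.comp t ht) (hderiv a hf.self_of_nhds ▸ hv₀U rfl)
      (by filter_upwards [hf, h hnhds] with t ht hO; rw [hderiv t ht]; exact hO.imp (·.2) id)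
    filter_upwards [hf, hφf] with t ht htU
    rwa [← hderiv t ht]
  filter_upwards [h hnhds, hφU] with t hO htU
  exact hO.elim (·.1) fun htZ => (hUZ.ne_of_mem htU htZ rfl).elim

theorem Continuous.tendsto_nhdsSet_image {X Y : Type*} [TopologicalSpace X] [TopologicalSpace Y]
    {f : X → Y} (hf : Continuous f) (s : Set X) : Tendsto f (𝓝ˢ s) (𝓝ˢ (f '' s)) :=
  tendsto_iff_comap.2 <| nhdsSet_le.2 fun x hx =>
    ((hf.tendsto x).mono_right (nhds_le_nhdsSet (mem_image_of_mem f hx))).le_comap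

theorem stmt15_general {V : Type*} [NormedAddCommGroup V] [NormedSpace ℝ V] [FiniteDimensional ℝ V]
    {Γ : Type*} [Group Γ] [Finite Γ] [DistribMulAction Γ V] [SMulCommClass Γ ℝ V]
    (I : Set ℝ) (hIopen : IsOpen I)
    (lam : ℝ → V) (hdiff : ∀ t ∈ I, DifferentiableAt ℝ lam t)
    (hcont : ContinuousOn
      (fun t => Quotient.mk (MulAction.orbitRel Γ (V × V)) (lam t, deriv lam t)) I) :
    ContinuousOn (deriv lam) I := by
  have : ContinuousConstSMul Γ V :=
    ⟨fun g => (DistribSMul.toLinearMap ℝ V g).continuous_of_finiteDimensional⟩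
  intro t₀ ht₀
  have hI : I ∈ 𝓝 t₀ := hIopen.mem_nhds ht₀
  have horbit := MulAction.tendsto_nhdsSet_orbit_of_tendsto_quotient (hcont.continuousAt hI)
  exact (continuousAt_deriv_of_tendsto_nhdsSet_finite (eventually_of_mem hI hdiff)
    ((Finite.finite_mulAction_orbit _).image Prod.snd)
    (continuous_snd.tendsto_nhdsSet_image _ |>.comp horbit)).continuousWithinAt

/-- Let `Γ` be a finite group acting linearly on a finite-dimensional real normed vector space
`V`, acting diagonally on `V × V`, with `Dπ : V × V → (V × V)/Γ` the projection onto the orbit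
space (with its quotient topology). Let `I` be an open interval and `λ : ℝ → V` differentiable
at every point of `I`. If `t ↦ Dπ (λ t, λ' t)` is continuous on `I`, then `λ'` is continuous
on `I`, i.e. `λ` is continuously differentiable on `I`. -/
theorem stmt15 {V : Type*} [NormedAddCommGroup V] [NormedSpace ℝ V] [FiniteDimensional ℝ V]
    {Γ : Type*} [Group Γ] [Finite Γ] [DistribMulAction Γ V] [SMulCommClass Γ ℝ V]
    (I : Set ℝ) (hIopen : IsOpen I) (hIconn : I.OrdConnected)
    (lam : ℝ → V) (hdiff : ∀ t ∈ I, DifferentiableAt ℝ lam t)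
    (hcont : ContinuousOn
      (fun t => Quotient.mk (MulAction.orbitRel Γ (V × V)) (lam t, deriv lam t)) I) :
    ContinuousOn (deriv lam) I :=
  stmt15_general I hIopen lam hdiff hcont
end

section
/- Let Ω be a measurable space and let λ, μ : Ω → V be measurable functions (V with its Borel σ-algebra) such that for every ω ∈ Ω there exists g ∈ Γ with λ(ω) = g·μ(ω). Then there exists a measurable function γ : Ω → Γ (Γ with the discrete measurable structure) such that λ(ω) = γ(ω)·μ(ω) for every ω ∈ Ω. -/
/-!
Each set `{ω | λ ω = g • μ ω}` is measurable because `g` acts by a linear, hence continuous, map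
of the finite-dimensional space `V`. Enumerating the countable group `Γ` and choosing for each `ω`
the first `g` whose set contains `ω` gives a measurable selection.
-/

theorem exists_measurable_choice_of_countable {Ω ι : Type*} [MeasurableSpace Ω]
    [MeasurableSpace ι] [Countable ι] {p : Ω → ι → Prop}
    (hp : ∀ i, MeasurableSet {ω | p ω i}) (h : ∀ ω, ∃ i, p ω i) :
    ∃ f : Ω → ι, Measurable f ∧ ∀ ω, p ω (f ω) := by
  classical
  rcases isEmpty_or_nonempty Ω with hΩ | hΩ
  · exact ⟨isEmptyElim, Subsingleton.measurable, isEmptyElim⟩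
  obtain ⟨ω₀⟩ := hΩ
  have : Nonempty ι := ⟨(h ω₀).choose⟩
  obtain ⟨s, hs⟩ := exists_surjective_nat ι
  have hq : ∀ ω, ∃ n, p ω (s n) := fun ω ↦ by
    obtain ⟨i, hi⟩ := h ω
    obtain ⟨n, rfl⟩ := hs i
    exact ⟨n, hi⟩
  exact ⟨fun ω ↦ s (Nat.find (hq ω)),
    measurable_from_nat.comp (measurable_find hq fun n ↦ hp (s n)),
    fun ω ↦ Nat.find_spec (hq ω)⟩

theorem continuous_const_smul_of_finiteDimensional {V Γ : Type*} [NormedAddCommGroup V]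
    [NormedSpace ℝ V] [FiniteDimensional ℝ V] [DistribSMul Γ V]
    [SMulCommClass Γ ℝ V] (g : Γ) : Continuous fun x : V ↦ g • x :=
  (DistribSMul.toLinearMap ℝ V g).continuous_of_finiteDimensional

theorem stmt16_general {V : Type*} [NormedAddCommGroup V] [NormedSpace ℝ V] [FiniteDimensional ℝ V]
    [MeasurableSpace V] [BorelSpace V]
    {Γ : Type*} [Group Γ] [Finite Γ] [DistribMulAction Γ V] [SMulCommClass Γ ℝ V]
    [MeasurableSpace Γ]
    {Ω : Type*} [MeasurableSpace Ω]
    (lam mu : Ω → V) (hlam : Measurable lam) (hmu : Measurable mu)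
    (hlift : ∀ ω : Ω, ∃ g : Γ, lam ω = g • mu ω) :
    ∃ γ : Ω → Γ, Measurable γ ∧ ∀ ω : Ω, lam ω = γ ω • mu ω :=
  exists_measurable_choice_of_countable
    (fun g ↦ measurableSet_eq_fun hlam
      ((continuous_const_smul_of_finiteDimensional g).measurable.comp hmu))
    hlift

/-- Let `Γ` be a finite group acting linearly on a finite-dimensional real normed vector space
`V` (with its Borel σ-algebra), `Ω` a measurable space, and `λ, μ : Ω → V` measurable with
`λ ω` in the `Γ`-orbit of `μ ω` for every `ω`. Then there is a measurable `γ : Ω → Γ` (with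
the discrete measurable structure on `Γ`) such that `λ ω = γ ω • μ ω` for every `ω`. -/
theorem stmt16 {V : Type*} [NormedAddCommGroup V] [NormedSpace ℝ V] [FiniteDimensional ℝ V]
    [MeasurableSpace V] [BorelSpace V]
    {Γ : Type*} [Group Γ] [Finite Γ] [DistribMulAction Γ V] [SMulCommClass Γ ℝ V]
    [MeasurableSpace Γ] [DiscreteMeasurableSpace Γ]
    {Ω : Type*} [MeasurableSpace Ω]
    (lam mu : Ω → V) (hlam : Measurable lam) (hmu : Measurable mu)
    (hlift : ∀ ω : Ω, ∃ g : Γ, lam ω = g • mu ω) :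
    ∃ γ : Ω → Γ, Measurable γ ∧ ∀ ω : Ω, lam ω = γ ω • mu ω :=
  stmt16_general lam mu hlam hmu hlift
end

section
/- Let I be a nonempty open interval and let λ, μ : ℝ → V be real analytic on I. If for every t ∈ I there exists g ∈ Γ with μ(t) = g·λ(t), then there exists a single g ∈ Γ such that μ(t) = g·λ(t) for all t ∈ I. -/
/-!
Near a point `t₀ ∈ I`, every `t` satisfies `μ t = g • λ t` for one of finitely many `g`, so by
pigeonhole a single `g` works at points accumulating at `t₀`. Since `t ↦ g • λ t` is analytic
(the action of `g` is a linear map of a finite-dimensional space, hence continuous), the identity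
principle propagates `μ = g • λ` to all of the connected set `I`.
-/

open Filter Set Topology

theorem AnalyticAt.const_smul_of_finiteDimensional {𝕜 : Type*} [NontriviallyNormedField 𝕜]
    [CompleteSpace 𝕜] {E V : Type*} [NormedAddCommGroup E] [NormedSpace 𝕜 E]
    [NormedAddCommGroup V] [NormedSpace 𝕜 V] [FiniteDimensional 𝕜 V]
    {M : Type*} [DistribSMul M V] [SMulCommClass M 𝕜 V]
    {f : E → V} {x : E} (hf : AnalyticAt 𝕜 f x) (c : M) :
    AnalyticAt 𝕜 (fun y => c • f y) x :=
  ((LinearMap.toContinuousLinearMap (DistribSMul.toLinearMap 𝕜 V c)).analyticAt _).comp hf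

theorem AnalyticOnNhd.exists_eqOn_of_forall_exists_eq {𝕜 : Type*} [NontriviallyNormedField 𝕜]
    {E : Type*} [NormedAddCommGroup E] [NormedSpace 𝕜 E] {ι : Type*} [Finite ι]
    {f : 𝕜 → E} {F : ι → 𝕜 → E} {U : Set 𝕜} (hf : AnalyticOnNhd 𝕜 f U)
    (hF : ∀ i, AnalyticOnNhd 𝕜 (F i) U) (hUo : IsOpen U) (hU : IsPreconnected U)
    (hne : U.Nonempty) (h : ∀ z ∈ U, ∃ i, f z = F i z) : ∃ i, EqOn f (F i) U := by
  obtain ⟨z₀, hz₀⟩ := hne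
  have hnear : ∀ᶠ z in 𝓝[≠] z₀, ∃ i, f z = F i z :=
    eventually_nhdsWithin_of_eventually_nhds ((hUo.eventually_mem hz₀).mono h)
  obtain ⟨i, hi⟩ := frequently_exists.mp hnear.frequently
  exact ⟨i, hf.eqOn_of_preconnected_of_frequently_eq (hF i) hU hz₀ hi⟩

/-- Let `Γ` be a finite group acting linearly on a finite-dimensional real normed vector space
`V`, and let `λ, μ : ℝ → V` be real analytic on a nonempty open interval `I` (i.e. analytic at
every point of `I`). If for every `t ∈ I` there is `g ∈ Γ` with `μ t = g • λ t`, then there is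
a single `g ∈ Γ` with `μ t = g • λ t` for all `t ∈ I`. -/
theorem stmt17 {V : Type*} [NormedAddCommGroup V] [NormedSpace ℝ V] [FiniteDimensional ℝ V]
    {Γ : Type*} [Group Γ] [Finite Γ] [DistribMulAction Γ V] [SMulCommClass Γ ℝ V]
    (I : Set ℝ) (hIopen : IsOpen I) (hIconn : I.OrdConnected) (hne : I.Nonempty)
    (lam mu : ℝ → V)
    (hlam : ∀ t ∈ I, AnalyticAt ℝ lam t) (hmu : ∀ t ∈ I, AnalyticAt ℝ mu t)
    (hlift : ∀ t ∈ I, ∃ g : Γ, mu t = g • lam t) :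
    ∃ g : Γ, ∀ t ∈ I, mu t = g • lam t :=
  AnalyticOnNhd.exists_eqOn_of_forall_exists_eq (F := fun (g : Γ) t => g • lam t) hmu
    (fun g t ht => (hlam t ht).const_smul_of_finiteDimensional g) hIopen hIconn.isPreconnected
    hne hlift
end

section
/- Let N ≥ 1, let λ₁, …, λ_N be distinct complex numbers, and let P₁, …, P_N ∈ Matrix n n ℂ satisfy P_l·P_m = 0 for l ≠ m, P_l·P_l = P_l, and Σ_{l=1}^N P_l = 1. Set A = Σ_{l=1}^N λ_l·P_l. Fix k ∈ {1, …, N} and ε > 0 such that |λ_l − λ_k| > ε for all l ≠ k. Then for every z with |z − λ_k| = ε the matrix z·1 − A is invertible, and for every μ ∈ ℂ: (a) if |μ − λ_k| > ε, then (2πi)⁻¹ · ∮_{|z−λ_k|=ε} (z − μ)⁻¹ · (z·1 − A)⁻¹ dz = (λ_k − μ)⁻¹ · P_k; (b) if |μ − λ_k| < ε and μ ≠ λ_l for every l, then (2πi)⁻¹ · ∮_{|z−λ_k|=ε} (z − μ)⁻¹ · (z·1 − A)⁻¹ dz = Σ_{l ≠ k} (μ − λ_l)⁻¹ · P_l. 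-/
/-!
On the range of `P l` the matrix `A` acts as `lam l`, so
`(z • 1 - A)⁻¹ = ∑ l, (z - lam l)⁻¹ • P l` and the contour integral splits into the scalar
integrals `∮ (z - μ)⁻¹ (z - lam l)⁻¹ dz`, weighted by `P l`. When exactly one of the two poles
lies inside the circle, Cauchy's formula makes such an integral `2πi` times the other factor at
that pole; it vanishes by Cauchy–Goursat when both poles lie outside, and by partial fractions
when both lie inside.
-/

open Metric Complex Real

section Idempotents

variable {ι 𝕜 R : Type*} [Fintype ι] [Ring R]

theorem OrthogonalIdempotents.sum_smul_mul_sum_smul [CommSemiring 𝕜] [Algebra 𝕜 R]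
    {P : ι → R} (hP : OrthogonalIdempotents P) (a b : ι → 𝕜) :
    (∑ i, a i • P i) * ∑ i, b i • P i = ∑ i, (a i * b i) • P i := by
  classical
  simp only [Finset.sum_mul_sum, smul_mul_smul_comm, hP.mul_eq, smul_ite, smul_zero,
    Finset.sum_ite_eq, Finset.mem_univ, if_true]

variable [Field 𝕜] [Algebra 𝕜 R] {P : ι → R} (hP : CompleteOrthogonalIdempotents P)
include hP

theorem CompleteOrthogonalIdempotents.smul_one_sub_sum_smul (z : 𝕜) (a : ι → 𝕜) :
    z • (1 : R) - ∑ i, a i • P i = ∑ i, (z - a i) • P i := by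
  rw [← hP.complete, Finset.smul_sum, ← Finset.sum_sub_distrib]
  simp only [sub_smul]

theorem CompleteOrthogonalIdempotents.sum_smul_mul_sum_inv_smul {a : ι → 𝕜}
    (ha : ∀ i, a i ≠ 0) : (∑ i, a i • P i) * ∑ i, (a i)⁻¹ • P i = 1 := by
  simp only [hP.sum_smul_mul_sum_smul, mul_inv_cancel₀ (ha _), one_smul, hP.complete]

theorem CompleteOrthogonalIdempotents.isUnit_sum_smul {a : ι → 𝕜} (ha : ∀ i, a i ≠ 0) :
    IsUnit (∑ i, a i • P i) :=
  ⟨⟨_, _, hP.sum_smul_mul_sum_inv_smul ha,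
    by simpa only [inv_inv] using hP.sum_smul_mul_sum_inv_smul (inv_ne_zero <| ha ·)⟩, rfl⟩

end Idempotents

theorem Matrix.inv_smul_one_sub_sum_smul {ι m 𝕜 : Type*} [Fintype ι] [Fintype m] [DecidableEq m]
    [Field 𝕜] {P : ι → Matrix m m 𝕜} (hP : CompleteOrthogonalIdempotents P) {a : ι → 𝕜} {z : 𝕜}
    (hz : ∀ i, z ≠ a i) : (z • 1 - ∑ i, a i • P i)⁻¹ = ∑ i, (z - a i)⁻¹ • P i := by
  rw [hP.smul_one_sub_sum_smul]
  exact Matrix.inv_eq_right_inv (hP.sum_smul_mul_sum_inv_smul fun i ↦ sub_ne_zero.2 (hz i))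

section CircleIntegral

variable {c w v : ℂ} {R : ℝ}

theorem differentiableOn_sub_inv {s : Set ℂ} (hv : v ∉ s) :
    DifferentiableOn ℂ (fun z ↦ (z - v)⁻¹) s := fun _ hz ↦
  ((differentiableAt_id.sub_const v).inv
    (sub_ne_zero.2 (ne_of_mem_of_not_mem hz hv))).differentiableWithinAt

theorem circleIntegral_sub_inv_mul_sub_inv_of_notMem_closedBall (hR : 0 ≤ R)
    (hw : w ∉ closedBall c R) (hv : v ∉ closedBall c R) :
    (∮ z in C(c, R), (z - w)⁻¹ * (z - v)⁻¹) = 0 :=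
  (((differentiableOn_sub_inv hw).mul (differentiableOn_sub_inv hv)).diffContOnCl_ball
    subset_rfl).circleIntegral_eq_zero hR

theorem circleIntegral_sub_inv_mul_sub_inv_of_mem_ball_of_notMem_closedBall
    (hw : w ∈ ball c R) (hv : v ∉ closedBall c R) :
    (∮ z in C(c, R), (z - w)⁻¹ * (z - v)⁻¹) = 2 * π * I * (w - v)⁻¹ :=
  ((differentiableOn_sub_inv hv).diffContOnCl_ball subset_rfl).circleIntegral_sub_inv_smul hw

theorem circleIntegral_sub_inv_mul_sub_inv_of_mem_ball (hwv : w ≠ v) (hw : w ∈ ball c R)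
    (hv : v ∈ ball c R) : (∮ z in C(c, R), (z - w)⁻¹ * (z - v)⁻¹) = 0 := by
  have hR : 0 ≤ R := (pos_of_mem_ball hw).le
  have hw' : w ∉ sphere c R := sphere_disjoint_ball.notMem_of_mem_right hw
  have hv' : v ∉ sphere c R := sphere_disjoint_ball.notMem_of_mem_right hv
  have partial_fractions : Set.EqOn (fun z ↦ (z - w)⁻¹ * (z - v)⁻¹)
      (fun z ↦ (w - v)⁻¹ * ((z - w)⁻¹ - (z - v)⁻¹)) (sphere c R) := fun z hz ↦ by
    have hzw : z - w ≠ 0 := sub_ne_zero.2 (ne_of_mem_of_not_mem hz hw')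
    have hzv : z - v ≠ 0 := sub_ne_zero.2 (ne_of_mem_of_not_mem hz hv')
    have hwv : w - v ≠ 0 := sub_ne_zero.2 hwv
    field_simp
    ring
  rw [circleIntegral.integral_congr hR partial_fractions, circleIntegral.integral_const_mul,
    circleIntegral.integral_sub ((differentiableOn_sub_inv hw').continuousOn.circleIntegrable hR)
      ((differentiableOn_sub_inv hv').continuousOn.circleIntegrable hR),
    circleIntegral.integral_sub_inv_of_mem_ball hw, circleIntegral.integral_sub_inv_of_mem_ball hv,
    sub_self, mul_zero]

theorem circleIntegral_sub_inv_smul_sum_sub_inv_smul {E ι : Type*} [NormedAddCommGroup E]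
    [NormedSpace ℂ E] [CompleteSpace E] [Fintype ι] {μ : ℂ} {a : ι → ℂ} (hR : 0 ≤ R)
    (hμ : μ ∉ sphere c R) (ha : ∀ i, a i ∉ sphere c R) (Q : ι → E) :
    (∮ z in C(c, R), (z - μ)⁻¹ • ∑ i, (z - a i)⁻¹ • Q i) =
      ∑ i, (∮ z in C(c, R), (z - μ)⁻¹ * (z - a i)⁻¹) • Q i := by
  simp only [Finset.smul_sum, smul_smul]
  rw [circleIntegral.integral_fun_sum (f := fun i z ↦ ((z - μ)⁻¹ * (z - a i)⁻¹) • Q i)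
    fun i _ ↦ ContinuousOn.circleIntegrable hR <|
      ((differentiableOn_sub_inv hμ).mul (differentiableOn_sub_inv (ha i))).continuousOn.smul
        continuousOn_const]
  exact Finset.sum_congr rfl fun i _ ↦ circleIntegral.integral_smul_const _ _ _ _

end CircleIntegral

attribute [local instance] Matrix.normedAddCommGroup Matrix.normedSpace

open Matrix Finset

theorem circleIntegral_sub_inv_smul_inv_smul_one_sub_sum_smul {ι m : Type*} [Fintype ι]
    [Fintype m] [DecidableEq m] {P : ι → Matrix m m ℂ} (hP : CompleteOrthogonalIdempotents P)
    {c μ : ℂ} {a : ι → ℂ} {R : ℝ} (hR : 0 ≤ R) (hμ : μ ∉ sphere c R)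
    (ha : ∀ i, a i ∉ sphere c R) :
    (∮ z in C(c, R), (z - μ)⁻¹ • (z • (1 : Matrix m m ℂ) - ∑ i, a i • P i)⁻¹) =
      ∑ i, (∮ z in C(c, R), (z - μ)⁻¹ * (z - a i)⁻¹) • P i := by
  rw [← circleIntegral_sub_inv_smul_sum_sub_inv_smul hR hμ ha]
  refine circleIntegral.integral_congr hR fun z hz ↦ ?_
  rw [Matrix.inv_smul_one_sub_sum_smul hP fun i h ↦ ha i (by rwa [← h])]

theorem stmt19_general {n : ℕ} (N : ℕ) (lam : Fin N → ℂ)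
    (P : Fin N → Matrix (Fin n) (Fin n) ℂ)
    (hmul : ∀ l m : Fin N, l ≠ m → P l * P m = 0)
    (hsum : ∑ l : Fin N, P l = 1)
    (A : Matrix (Fin n) (Fin n) ℂ) (hA : A = ∑ l : Fin N, lam l • P l)
    (k : Fin N) (ε : ℝ) (hε : 0 < ε)
    (hsep : ∀ l : Fin N, l ≠ k → ε < ‖lam l - lam k‖) :
    (∀ z : ℂ, ‖z - lam k‖ = ε →
      IsUnit (z • (1 : Matrix (Fin n) (Fin n) ℂ) - A)) ∧
    (∀ μ : ℂ, ε < ‖μ - lam k‖ →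
      (2 * (Real.pi : ℂ) * Complex.I)⁻¹ •
        (∮ z in C(lam k, ε), (z - μ)⁻¹ • (z • (1 : Matrix (Fin n) (Fin n) ℂ) - A)⁻¹) =
      (lam k - μ)⁻¹ • P k) ∧
    (∀ μ : ℂ, ‖μ - lam k‖ < ε → (∀ l : Fin N, μ ≠ lam l) →
      (2 * (Real.pi : ℂ) * Complex.I)⁻¹ •
        (∮ z in C(lam k, ε), (z - μ)⁻¹ • (z • (1 : Matrix (Fin n) (Fin n) ℂ) - A)⁻¹) =
      ∑ l ∈ univ.erase k, (μ - lam l)⁻¹ • P l) := by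
  have hP : CompleteOrthogonalIdempotents P :=
    CompleteOrthogonalIdempotents.iff_ortho_complete.2 ⟨fun l m ↦ hmul l m, hsum⟩
  have h2πI : (2 * π * I : ℂ) ≠ 0 := two_pi_I_ne_zero
  have hk : lam k ∈ ball (lam k) ε := mem_ball_self hε
  have hout (l) (hl : l ≠ k) : lam l ∉ closedBall (lam k) ε := by
    simpa [Complex.dist_eq] using hsep l hl
  have hoff (l) : lam l ∉ sphere (lam k) ε := by
    rcases eq_or_ne l k with rfl | hl
    · exact sphere_disjoint_ball.notMem_of_mem_right hk
    · exact fun h ↦ hout l hl (sphere_subset_closedBall h)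
  have hint (μ) (hμ : μ ∉ sphere (lam k) ε) := hA ▸
    circleIntegral_sub_inv_smul_inv_smul_one_sub_sum_smul hP hε.le hμ hoff
  refine ⟨fun z hz ↦ ?_, fun μ hμ ↦ ?_, fun μ hμ hμlam ↦ ?_⟩
  · rw [hA, hP.smul_one_sub_sum_smul]
    refine hP.isUnit_sum_smul fun l ↦ sub_ne_zero.2 fun h ↦ hoff l ?_
    rwa [← h, mem_sphere, Complex.dist_eq]
  · have hμ' : μ ∉ closedBall (lam k) ε := by simpa [Complex.dist_eq] using hμ
    rw [hint μ (fun h ↦ hμ' (sphere_subset_closedBall h)), Finset.sum_eq_single k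
      (fun l _ hl ↦ by rw [circleIntegral_sub_inv_mul_sub_inv_of_notMem_closedBall hε.le hμ'
        (hout l hl), zero_smul]) (absurd (mem_univ k)), smul_smul]
    simp only [mul_comm (_ - μ)⁻¹]
    rw [circleIntegral_sub_inv_mul_sub_inv_of_mem_ball_of_notMem_closedBall hk hμ',
      inv_mul_cancel_left₀ h2πI]
  · have hμ' : μ ∈ ball (lam k) ε := by rwa [mem_ball, Complex.dist_eq]
    rw [hint μ (sphere_disjoint_ball.notMem_of_mem_right hμ'),
      ← Finset.add_sum_erase _ _ (mem_univ k),
      circleIntegral_sub_inv_mul_sub_inv_of_mem_ball (hμlam k) hμ' hk, zero_smul, zero_add,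
      Finset.smul_sum]
    refine Finset.sum_congr rfl fun l hl ↦ ?_
    rw [circleIntegral_sub_inv_mul_sub_inv_of_mem_ball_of_notMem_closedBall hμ'
      (hout l (ne_of_mem_erase hl)), smul_smul, inv_mul_cancel_left₀ h2πI]

/-- Resolvent computation: let `A = Σ λ_l • P_l` with `λ_l` distinct and `P_l` a complete
family of mutually annihilating idempotents, and let `ε > 0` be such that the circle
`|z - λ_k| = ε` separates `λ_k` from the other `λ_l`. Then `z•1 - A` is invertible on that
circle, and the contour integral `(2πi)⁻¹ ∮_{|z-λ_k|=ε} (z-μ)⁻¹ (z•1-A)⁻¹ dz` equals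
`(λ_k - μ)⁻¹ • P_k` if `|μ - λ_k| > ε`, and `Σ_{l ≠ k} (μ - λ_l)⁻¹ • P_l` if
`|μ - λ_k| < ε` and `μ` is not one of the `λ_l`. -/
theorem stmt19 {n : ℕ} (N : ℕ) (hN : 1 ≤ N) (lam : Fin N → ℂ)
    (hdist : Function.Injective lam)
    (P : Fin N → Matrix (Fin n) (Fin n) ℂ)
    (hmul : ∀ l m : Fin N, l ≠ m → P l * P m = 0)
    (hidem : ∀ l : Fin N, P l * P l = P l)
    (hsum : ∑ l : Fin N, P l = 1)
    (A : Matrix (Fin n) (Fin n) ℂ) (hA : A = ∑ l : Fin N, lam l • P l)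
    (k : Fin N) (ε : ℝ) (hε : 0 < ε)
    (hsep : ∀ l : Fin N, l ≠ k → ε < ‖lam l - lam k‖) :
    (∀ z : ℂ, ‖z - lam k‖ = ε →
      IsUnit (z • (1 : Matrix (Fin n) (Fin n) ℂ) - A)) ∧
    (∀ μ : ℂ, ε < ‖μ - lam k‖ →
      (2 * (Real.pi : ℂ) * Complex.I)⁻¹ •
        (∮ z in C(lam k, ε), (z - μ)⁻¹ • (z • (1 : Matrix (Fin n) (Fin n) ℂ) - A)⁻¹) =
      (lam k - μ)⁻¹ • P k) ∧
    (∀ μ : ℂ, ‖μ - lam k‖ < ε → (∀ l : Fin N, μ ≠ lam l) →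
      (2 * (Real.pi : ℂ) * Complex.I)⁻¹ •
        (∮ z in C(lam k, ε), (z - μ)⁻¹ • (z • (1 : Matrix (Fin n) (Fin n) ℂ) - A)⁻¹) =
      ∑ l ∈ univ.erase k, (μ - lam l)⁻¹ • P l) :=
  stmt19_general N lam P hmul hsum A hA k ε hε hsep
end
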